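/- arXiv:2005.10342 — 7 statements merged into one kernel-verified Lean document; each statement's English description precedes it below -/
import Mathlib

section
/- Let ρ be a positive trace-class operator on L²(ℝᵈ) with √H₀ ρ √H₀ trace class, where H₀ = -Δ. Then √(n[ρ]) ∈ H¹(ℝᵈ) and ‖∇√(n[ρ])‖²_{L²} ≤ Tr(ρ) + Tr(√H₀ ρ √H₀). -/
open MeasureTheory
open scoped ENNReal

open Filter
open scoped Topology

lemma aux_tsum_toReal {f : ℕ → ℝ} (hf : ∀ p, 0 ≤ f p) :
    ∑' p, f p = (∑' p, ENNReal.ofReal (f p)).toReal := by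
  by_cases h : ∑' p, ENNReal.ofReal (f p) = ⊤
  · rw [h, ENNReal.toReal_top]
    refine tsum_eq_zero_of_not_summable fun hs => ?_
    rw [← ENNReal.ofReal_tsum_of_nonneg hf hs] at h
    exact ENNReal.ofReal_ne_top h
  · have hs : Summable f := by
      refine (ENNReal.summable_toReal h).congr fun p => ?_
      rw [ENNReal.toReal_ofReal (hf p)]
    rw [← ENNReal.ofReal_tsum_of_nonneg hf hs, ENNReal.toReal_ofReal (tsum_nonneg hf)]

lemma aux_cs (s : Finset ℕ) (c r m a b : ℕ → ℝ) (hc : ∀ p, 0 ≤ c p) :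
    (∑ p ∈ s, c p * (r p * a p + m p * b p))^2
      ≤ (∑ p ∈ s, c p * (r p^2 + m p^2)) * (∑ p ∈ s, c p * (a p^2 + b p^2)) := by
  have key := Finset.sum_mul_sq_le_sq_mul_sq (s ×ˢ (Finset.univ : Finset (Fin 2)))
    (fun q => Real.sqrt (c q.1) * (if q.2 = 0 then r q.1 else m q.1))
    (fun q => Real.sqrt (c q.1) * (if q.2 = 0 then a q.1 else b q.1))
  have hsq : ∀ p, Real.sqrt (c p) * Real.sqrt (c p) = c p := fun p => Real.mul_self_sqrt (hc p)
  rw [Finset.sum_product, Finset.sum_product, Finset.sum_product] at key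
  simp only [Fin.sum_univ_two] at key
  norm_num at key
  calc (∑ p ∈ s, c p * (r p * a p + m p * b p))^2
      = (∑ p ∈ s, (Real.sqrt (c p) * r p * (Real.sqrt (c p) * a p)
          + Real.sqrt (c p) * m p * (Real.sqrt (c p) * b p)))^2 := by
        congr 1; refine Finset.sum_congr rfl fun p _ => ?_
        linear_combination (-(r p * a p + m p * b p)) * (hsq p)
    _ ≤ (∑ p ∈ s, ((Real.sqrt (c p) * r p)^2 + (Real.sqrt (c p) * m p)^2))
        * (∑ p ∈ s, ((Real.sqrt (c p) * a p)^2 + (Real.sqrt (c p) * b p)^2)) := by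
        convert key using 3 <;> ring
    _ = (∑ p ∈ s, c p * (r p^2 + m p^2)) * (∑ p ∈ s, c p * (a p^2 + b p^2)) := by
        congr 1
        · refine Finset.sum_congr rfl fun p _ => ?_
          linear_combination (r p^2 + m p^2) * (hsq p)
        · refine Finset.sum_congr rfl fun p _ => ?_
          linear_combination (a p^2 + b p^2) * (hsq p)

lemma aux_sqrt_le_one_add (s t : ℝ) (ht : 0 ≤ t) (hs : s ≤ 1 + t) : Real.sqrt s ≤ 1 + t := by
  have h1 : Real.sqrt s ≤ Real.sqrt ((1+t)^2) := Real.sqrt_le_sqrt (by nlinarith)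
  rwa [Real.sqrt_sq (by linarith)] at h1

lemma aux_inv_sq_le_one (N : ℕ) : (((N:ℝ)+1)⁻¹)^2 ≤ 1 := by
  have h0 : (0:ℝ) ≤ (N:ℝ) := Nat.cast_nonneg N
  have h1 : (1:ℝ) ≤ (N:ℝ)+1 := by linarith
  have h2 : (0:ℝ) ≤ ((N:ℝ)+1)⁻¹ := by positivity
  have h3 : ((N:ℝ)+1)⁻¹ ≤ 1 := by
    rw [inv_le_one_iff₀]; right; exact h1
  nlinarith

lemma aux_sqrt_le_half (t : ℝ) (ht : 0 ≤ t) : Real.sqrt t ≤ (1 + t) / 2 := by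
  nlinarith [Real.sq_sqrt ht, Real.sqrt_nonneg t, sq_nonneg (Real.sqrt t - 1)]

noncomputable section
namespace SqrtH1
variable {d : ℕ}



def uN (ρ : ℕ → ℝ) (φ : ℕ → EuclideanSpace ℝ (Fin d) → ℂ) (N : ℕ)
    (x : EuclideanSpace ℝ (Fin d)) : ℝ :=
  ∑ p ∈ Finset.range N, ρ p * Complex.normSq (φ p x)

def FN (ρ : ℕ → ℝ) (φ : ℕ → EuclideanSpace ℝ (Fin d) → ℂ) (N : ℕ)
    (x : EuclideanSpace ℝ (Fin d)) : ℝ :=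
  Real.sqrt ((((N:ℝ)+1)⁻¹)^2 + uN ρ φ N x)

def wpi (φ : ℕ → EuclideanSpace ℝ (Fin d) → ℂ) (p : ℕ) (i : Fin d)
    (x : EuclideanSpace ℝ (Fin d)) : ℝ :=
  (φ p x).re * (fderiv ℝ (φ p) x ((EuclideanSpace.single i 1))).re + (φ p x).im * (fderiv ℝ (φ p) x ((EuclideanSpace.single i 1))).im

def hN (ρ : ℕ → ℝ) (φ : ℕ → EuclideanSpace ℝ (Fin d) → ℂ) (N : ℕ) (i : Fin d)
    (x : EuclideanSpace ℝ (Fin d)) : ℝ :=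
  ∑ p ∈ Finset.range N, ρ p * wpi φ p i x

def kNi (ρ : ℕ → ℝ) (φ : ℕ → EuclideanSpace ℝ (Fin d) → ℂ) (N : ℕ) (i : Fin d)
    (x : EuclideanSpace ℝ (Fin d)) : ℝ :=
  ∑ p ∈ Finset.range N, ρ p * Complex.normSq (fderiv ℝ (φ p) x ((EuclideanSpace.single i 1)))

/-- CLM derivative of `normSq ∘ φ`. -/
def nsD (φ : ℕ → EuclideanSpace ℝ (Fin d) → ℂ) (p : ℕ) (x : EuclideanSpace ℝ (Fin d)) :
    EuclideanSpace ℝ (Fin d) →L[ℝ] ℝ :=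
  ((φ p x).re • (Complex.reCLM.comp (fderiv ℝ (φ p) x))
    + (φ p x).re • (Complex.reCLM.comp (fderiv ℝ (φ p) x)))
  + ((φ p x).im • (Complex.imCLM.comp (fderiv ℝ (φ p) x))
    + (φ p x).im • (Complex.imCLM.comp (fderiv ℝ (φ p) x)))

lemma hasFDerivAt_normSq_comp (φ : ℕ → EuclideanSpace ℝ (Fin d) → ℂ) (p : ℕ)
    (hφ : Differentiable ℝ (φ p)) (x : EuclideanSpace ℝ (Fin d)) :
    HasFDerivAt (fun y => Complex.normSq (φ p y)) (nsD φ p x) x := by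
  have hre : HasFDerivAt (fun y => (φ p y).re) (Complex.reCLM.comp (fderiv ℝ (φ p) x)) x :=
    (Complex.reCLM.hasFDerivAt).comp x (hφ x).hasFDerivAt
  have him : HasFDerivAt (fun y => (φ p y).im) (Complex.imCLM.comp (fderiv ℝ (φ p) x)) x :=
    (Complex.imCLM.hasFDerivAt).comp x (hφ x).hasFDerivAt
  have h2 := (hre.mul hre).add (him.mul him)
  simp only [Complex.normSq_apply]
  exact h2

lemma uN_nonneg (ρ : ℕ → ℝ) (φ : ℕ → EuclideanSpace ℝ (Fin d) → ℂ) (hρ : ∀ p, 0 ≤ ρ p)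
    (N : ℕ) (x : EuclideanSpace ℝ (Fin d)) : 0 ≤ uN ρ φ N x :=
  Finset.sum_nonneg fun p _ => mul_nonneg (hρ p) (Complex.normSq_nonneg _)

lemma FN_pos (ρ : ℕ → ℝ) (φ : ℕ → EuclideanSpace ℝ (Fin d) → ℂ) (hρ : ∀ p, 0 ≤ ρ p)
    (N : ℕ) (x : EuclideanSpace ℝ (Fin d)) : 0 < FN ρ φ N x := by
  apply Real.sqrt_pos.2
  have h1 : (0:ℝ) < (((N:ℝ)+1)⁻¹)^2 := by positivity
  linarith [uN_nonneg ρ φ hρ N x]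

lemma hasFDerivAt_FN (ρ : ℕ → ℝ) (φ : ℕ → EuclideanSpace ℝ (Fin d) → ℂ) (hρ : ∀ p, 0 ≤ ρ p)
    (hφdiff : ∀ p, Differentiable ℝ (φ p)) (N : ℕ) (x : EuclideanSpace ℝ (Fin d)) :
    HasFDerivAt (FN ρ φ N)
      ((1 / (2 * FN ρ φ N x)) • (∑ p ∈ Finset.range N, ρ p • nsD φ p x)) x := by
  have hu : HasFDerivAt (fun y => (((N:ℝ)+1)⁻¹)^2 + uN ρ φ N y)
      (∑ p ∈ Finset.range N, ρ p • nsD φ p x) x := by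
    apply HasFDerivAt.const_add
    exact HasFDerivAt.fun_sum fun p _ => (hasFDerivAt_normSq_comp φ p (hφdiff p) x).const_mul (ρ p)
  have hne : (((N:ℝ)+1)⁻¹)^2 + uN ρ φ N x ≠ 0 := by
    have h1 : (0:ℝ) < (((N:ℝ)+1)⁻¹)^2 := by positivity
    have := uN_nonneg ρ φ hρ N x
    positivity
  exact hu.sqrt hne

lemma FN_differentiable (ρ : ℕ → ℝ) (φ : ℕ → EuclideanSpace ℝ (Fin d) → ℂ) (hρ : ∀ p, 0 ≤ ρ p)
    (hφdiff : ∀ p, Differentiable ℝ (φ p)) (N : ℕ) : Differentiable ℝ (FN ρ φ N) :=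
  fun x => (hasFDerivAt_FN ρ φ hρ hφdiff N x).differentiableAt

lemma fderiv_FN_apply (ρ : ℕ → ℝ) (φ : ℕ → EuclideanSpace ℝ (Fin d) → ℂ) (hρ : ∀ p, 0 ≤ ρ p)
    (hφdiff : ∀ p, Differentiable ℝ (φ p)) (N : ℕ) (i : Fin d) (x : EuclideanSpace ℝ (Fin d)) :
    fderiv ℝ (FN ρ φ N) x ((EuclideanSpace.single i 1)) = hN ρ φ N i x / FN ρ φ N x := by
  rw [(hasFDerivAt_FN ρ φ hρ hφdiff N x).fderiv]
  have hFpos := FN_pos ρ φ hρ N x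
  simp only [ContinuousLinearMap.coe_smul', Pi.smul_apply, ContinuousLinearMap.coe_sum',
    Finset.sum_apply, ContinuousLinearMap.add_apply, ContinuousLinearMap.smul_apply,
    ContinuousLinearMap.coe_comp', Function.comp_apply, Complex.reCLM_apply, Complex.imCLM_apply,
    smul_eq_mul, hN, wpi, nsD]
  rw [Finset.sum_div, Finset.mul_sum]
  refine Finset.sum_congr rfl fun p _ => ?_
  field_simp
  ring


def Kp (φ : ℕ → EuclideanSpace ℝ (Fin d) → ℂ) (p : ℕ) (x : EuclideanSpace ℝ (Fin d)) : ℝ :=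
  ∑ i, Complex.normSq (fderiv ℝ (φ p) x (EuclideanSpace.single i 1))

def Sn (ρ : ℕ → ℝ) (φ : ℕ → EuclideanSpace ℝ (Fin d) → ℂ) (x : EuclideanSpace ℝ (Fin d)) :
    ℝ≥0∞ := ∑' p, ENNReal.ofReal (ρ p * Complex.normSq (φ p x))

def SK (ρ : ℕ → ℝ) (φ : ℕ → EuclideanSpace ℝ (Fin d) → ℂ) (x : EuclideanSpace ℝ (Fin d)) :
    ℝ≥0∞ := ∑' p, ENNReal.ofReal (ρ p * Kp φ p x)

def vA (ρ : ℕ → ℝ) (φ : ℕ → EuclideanSpace ℝ (Fin d) → ℂ) (p : ℕ) (i : Fin d)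
    (x : EuclideanSpace ℝ (Fin d)) : ℝ :=
  ρ p * (((φ p x).re + (fderiv ℝ (φ p) x (EuclideanSpace.single i 1)).re)^2
    + ((φ p x).im + (fderiv ℝ (φ p) x (EuclideanSpace.single i 1)).im)^2) / 4

def vB (ρ : ℕ → ℝ) (φ : ℕ → EuclideanSpace ℝ (Fin d) → ℂ) (p : ℕ) (i : Fin d)
    (x : EuclideanSpace ℝ (Fin d)) : ℝ :=
  ρ p * (((φ p x).re - (fderiv ℝ (φ p) x (EuclideanSpace.single i 1)).re)^2
    + ((φ p x).im - (fderiv ℝ (φ p) x (EuclideanSpace.single i 1)).im)^2) / 4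

def gF (ρ : ℕ → ℝ) (φ : ℕ → EuclideanSpace ℝ (Fin d) → ℂ) (x : EuclideanSpace ℝ (Fin d)) :
    Fin d → ℝ := fun i =>
  ((∑' p, ENNReal.ofReal (vA ρ φ p i x)).toReal - (∑' p, ENNReal.ofReal (vB ρ φ p i x)).toReal)
    / Real.sqrt ((Sn ρ φ x).toReal)

lemma vA_sub_vB (ρ : ℕ → ℝ) (φ : ℕ → EuclideanSpace ℝ (Fin d) → ℂ) (p : ℕ) (i : Fin d)
    (x : EuclideanSpace ℝ (Fin d)) : vA ρ φ p i x - vB ρ φ p i x = ρ p *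
      ((φ p x).re * (fderiv ℝ (φ p) x (EuclideanSpace.single i 1)).re
        + (φ p x).im * (fderiv ℝ (φ p) x (EuclideanSpace.single i 1)).im) := by
  simp only [vA, vB]; ring

lemma vA_nonneg (ρ : ℕ → ℝ) (hρ : ∀ p, 0 ≤ ρ p) (φ : ℕ → EuclideanSpace ℝ (Fin d) → ℂ)
    (p : ℕ) (i : Fin d) (x : EuclideanSpace ℝ (Fin d)) : 0 ≤ vA ρ φ p i x := by
  have := hρ p; unfold vA; positivity

lemma vB_nonneg (ρ : ℕ → ℝ) (hρ : ∀ p, 0 ≤ ρ p) (φ : ℕ → EuclideanSpace ℝ (Fin d) → ℂ)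
    (p : ℕ) (i : Fin d) (x : EuclideanSpace ℝ (Fin d)) : 0 ≤ vB ρ φ p i x := by
  have := hρ p; unfold vB; positivity

lemma normSq_single_le_Kp (φ : ℕ → EuclideanSpace ℝ (Fin d) → ℂ) (p : ℕ) (i : Fin d)
    (x : EuclideanSpace ℝ (Fin d)) :
    Complex.normSq (fderiv ℝ (φ p) x (EuclideanSpace.single i 1)) ≤ Kp φ p x :=
  Finset.single_le_sum (f := fun j => Complex.normSq (fderiv ℝ (φ p) x (EuclideanSpace.single j 1)))
    (fun j _ => Complex.normSq_nonneg _) (Finset.mem_univ i)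

lemma vA_le (ρ : ℕ → ℝ) (hρ : ∀ p, 0 ≤ ρ p) (φ : ℕ → EuclideanSpace ℝ (Fin d) → ℂ)
    (p : ℕ) (i : Fin d) (x : EuclideanSpace ℝ (Fin d)) :
    vA ρ φ p i x ≤ (ρ p * Complex.normSq (φ p x) + ρ p * Kp φ p x) / 2 := by
  have h1 := normSq_single_le_Kp φ p i x
  have h2 : Complex.normSq (φ p x) = (φ p x).re^2 + (φ p x).im^2 := by
    rw [Complex.normSq_apply]; ring
  have h3 : Complex.normSq (fderiv ℝ (φ p) x (EuclideanSpace.single i 1))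
      = (fderiv ℝ (φ p) x (EuclideanSpace.single i 1)).re^2
        + (fderiv ℝ (φ p) x (EuclideanSpace.single i 1)).im^2 := by
    rw [Complex.normSq_apply]; ring
  have := hρ p
  unfold vA
  nlinarith [sq_nonneg ((φ p x).re - (fderiv ℝ (φ p) x (EuclideanSpace.single i 1)).re),
    sq_nonneg ((φ p x).im - (fderiv ℝ (φ p) x (EuclideanSpace.single i 1)).im)]

lemma vB_le (ρ : ℕ → ℝ) (hρ : ∀ p, 0 ≤ ρ p) (φ : ℕ → EuclideanSpace ℝ (Fin d) → ℂ)
    (p : ℕ) (i : Fin d) (x : EuclideanSpace ℝ (Fin d)) :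
    vB ρ φ p i x ≤ (ρ p * Complex.normSq (φ p x) + ρ p * Kp φ p x) / 2 := by
  have h1 := normSq_single_le_Kp φ p i x
  have h2 : Complex.normSq (φ p x) = (φ p x).re^2 + (φ p x).im^2 := by
    rw [Complex.normSq_apply]; ring
  have h3 : Complex.normSq (fderiv ℝ (φ p) x (EuclideanSpace.single i 1))
      = (fderiv ℝ (φ p) x (EuclideanSpace.single i 1)).re^2
        + (fderiv ℝ (φ p) x (EuclideanSpace.single i 1)).im^2 := by
    rw [Complex.normSq_apply]; ring
  have := hρ p
  unfold vB
  nlinarith [sq_nonneg ((φ p x).re + (fderiv ℝ (φ p) x (EuclideanSpace.single i 1)).re),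
    sq_nonneg ((φ p x).im + (fderiv ℝ (φ p) x (EuclideanSpace.single i 1)).im)]


lemma kNi_nonneg (ρ : ℕ → ℝ) (φ : ℕ → EuclideanSpace ℝ (Fin d) → ℂ) (hρ : ∀ p, 0 ≤ ρ p)
    (N : ℕ) (i : Fin d) (x : EuclideanSpace ℝ (Fin d)) : 0 ≤ kNi ρ φ N i x :=
  Finset.sum_nonneg fun p _ => mul_nonneg (hρ p) (Complex.normSq_nonneg _)

lemma hN_sq_le (ρ : ℕ → ℝ) (φ : ℕ → EuclideanSpace ℝ (Fin d) → ℂ) (hρ : ∀ p, 0 ≤ ρ p)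
    (N : ℕ) (i : Fin d) (x : EuclideanSpace ℝ (Fin d)) :
    (hN ρ φ N i x)^2 ≤ uN ρ φ N x * kNi ρ φ N i x := by
  have key := aux_cs (Finset.range N) ρ (fun p => (φ p x).re) (fun p => (φ p x).im)
    (fun p => (fderiv ℝ (φ p) x (EuclideanSpace.single i 1)).re)
    (fun p => (fderiv ℝ (φ p) x (EuclideanSpace.single i 1)).im) hρ
  have e1 : uN ρ φ N x = ∑ p ∈ Finset.range N, ρ p * ((φ p x).re^2 + (φ p x).im^2) :=
    Finset.sum_congr rfl fun p _ => by rw [Complex.normSq_apply]; ring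
  have e2 : kNi ρ φ N i x = ∑ p ∈ Finset.range N,
      ρ p * ((fderiv ℝ (φ p) x (EuclideanSpace.single i 1)).re^2
        + (fderiv ℝ (φ p) x (EuclideanSpace.single i 1)).im^2) :=
    Finset.sum_congr rfl fun p _ => by rw [Complex.normSq_apply]; ring
  rw [hN, e1, e2]
  simpa only [wpi] using key

lemma fderiv_FN_sq_le (ρ : ℕ → ℝ) (φ : ℕ → EuclideanSpace ℝ (Fin d) → ℂ) (hρ : ∀ p, 0 ≤ ρ p)
    (hφdiff : ∀ p, Differentiable ℝ (φ p)) (N : ℕ) (i : Fin d) (x : EuclideanSpace ℝ (Fin d)) :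
    (fderiv ℝ (FN ρ φ N) x (EuclideanSpace.single i 1))^2 ≤ kNi ρ φ N i x := by
  rw [fderiv_FN_apply ρ φ hρ hφdiff N i x]
  have h1 := hN_sq_le ρ φ hρ N i x
  have hF := FN_pos ρ φ hρ N x
  have hu := uN_nonneg ρ φ hρ N x
  have hk := kNi_nonneg ρ φ hρ N i x
  have hF2 : uN ρ φ N x ≤ (FN ρ φ N x)^2 := by
    rw [FN, Real.sq_sqrt (by positivity)]
    nlinarith [sq_nonneg (((N:ℝ)+1)⁻¹)]
  rw [div_pow, div_le_iff₀ (by positivity)]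
  nlinarith [mul_le_mul_of_nonneg_right hF2 hk]

lemma abs_fderiv_FN_le (ρ : ℕ → ℝ) (φ : ℕ → EuclideanSpace ℝ (Fin d) → ℂ) (hρ : ∀ p, 0 ≤ ρ p)
    (hφdiff : ∀ p, Differentiable ℝ (φ p)) (N : ℕ) (i : Fin d) (x : EuclideanSpace ℝ (Fin d)) :
    |fderiv ℝ (FN ρ φ N) x (EuclideanSpace.single i 1)| ≤ Real.sqrt (kNi ρ φ N i x) := by
  rw [← Real.sqrt_sq_eq_abs]
  exact Real.sqrt_le_sqrt (fderiv_FN_sq_le ρ φ hρ hφdiff N i x)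

end SqrtH1
end

/-- `g : ℝᵈ → ℝᵈ` is a weak gradient of `f : ℝᵈ → ℝ`: for every smooth compactly supported
test function `ψ` and every direction `v`, `∫ f ∂_v ψ = -∫ ⟨g, v⟩ ψ`. -/
def IsWeakGradient {d : ℕ} (f : EuclideanSpace ℝ (Fin d) → ℝ)
    (g : EuclideanSpace ℝ (Fin d) → Fin d → ℝ) : Prop :=
  ∀ ψ : EuclideanSpace ℝ (Fin d) → ℝ, ContDiff ℝ (⊤ : ℕ∞) ψ → HasCompactSupport ψ →
    ∀ i : Fin d, ∫ x, f x * fderiv ℝ ψ x (EuclideanSpace.single i 1)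
      = -∫ x, g x i * ψ x

/-- For a density operator `ρ ∈ 𝓔⁺` given by eigenvalues `ρ_p ≥ 0` and normalized
eigenfunctions `φ_p`, with local density `n[ρ] = Σ_p ρ_p |φ_p|²`, the function `√n[ρ]`
belongs to `H¹(ℝᵈ)`: it is in `L²` and admits a weak gradient `g` with
`‖∇√n[ρ]‖²_{L²} ≤ Tr(ρ) + Tr(√H₀ ρ √H₀) = ‖ρ‖_𝓔`. -/
theorem stmt1 (d : ℕ) (ρ : ℕ → ℝ) (hρ : ∀ p, 0 ≤ ρ p)
    (φ : ℕ → EuclideanSpace ℝ (Fin d) → ℂ)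
    (hφmeas : ∀ p, Measurable (φ p))
    (hφdiff : ∀ p, Differentiable ℝ (φ p))
    (hφnorm : ∀ p, ∫ x, Complex.normSq (φ p x) = 1)
    (hφgrad : ∀ p, Integrable fun x =>
      ∑ i, Complex.normSq (fderiv ℝ (φ p) x (EuclideanSpace.single i 1)))
    (htr : Summable ρ)
    (hkin : Summable fun p => ρ p * ∫ x,
      ∑ i, Complex.normSq (fderiv ℝ (φ p) x (EuclideanSpace.single i 1))) :
    MemLp (fun x => Real.sqrt (∑' p, ρ p * Complex.normSq (φ p x))) 2 volume ∧
    ∃ g : EuclideanSpace ℝ (Fin d) → Fin d → ℝ,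
      Measurable g ∧
      IsWeakGradient (fun x => Real.sqrt (∑' p, ρ p * Complex.normSq (φ p x))) g ∧
      ∫ x, ∑ i, (g x i) ^ 2
        ≤ (∑' p, ρ p) + ∑' p, ρ p * ∫ x,
            ∑ i, Complex.normSq (fderiv ℝ (φ p) x (EuclideanSpace.single i 1)) := by
  classical
  have hterm_nonneg : ∀ x p, 0 ≤ ρ p * Complex.normSq (φ p x) :=
    fun x p => mul_nonneg (hρ p) (Complex.normSq_nonneg _)
  have hKp_nonneg : ∀ p x, 0 ≤ SqrtH1.Kp φ p x :=
    fun p x => Finset.sum_nonneg fun i _ => Complex.normSq_nonneg _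
  have hn'eq : ∀ x, (∑' p, ρ p * Complex.normSq (φ p x)) = (SqrtH1.Sn ρ φ x).toReal :=
    fun x => aux_tsum_toReal (hterm_nonneg x)
  have hfeq : (fun x => Real.sqrt (∑' p, ρ p * Complex.normSq (φ p x)))
      = fun x => Real.sqrt ((SqrtH1.Sn ρ φ x).toReal) := funext fun x => by rw [hn'eq]
  rw [hfeq]
  -- basic measurability
  have hmeas_ns : ∀ p, Measurable fun x => Complex.normSq (φ p x) :=
    fun p => Complex.continuous_normSq.measurable.comp (hφmeas p)
  have hmeas_fd : ∀ p (i : Fin d),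
      Measurable fun x => fderiv ℝ (φ p) x (EuclideanSpace.single i 1) :=
    fun p i => measurable_fderiv_apply_const ℝ (φ p) _
  have hmeas_Kp : ∀ p, Measurable (SqrtH1.Kp φ p) :=
    fun p => Finset.measurable_sum _ fun i _ => Complex.continuous_normSq.measurable.comp (hmeas_fd p i)
  have hmeas_Sn : Measurable (SqrtH1.Sn ρ φ) :=
    Measurable.ennreal_tsum fun p => (measurable_const.mul (hmeas_ns p)).ennreal_ofReal
  have hmeas_SK : Measurable (SqrtH1.SK ρ φ) :=
    Measurable.ennreal_tsum fun p => (measurable_const.mul (hmeas_Kp p)).ennreal_ofReal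
  -- integrability of normSq (φ p)
  have hInt_ns : ∀ p, Integrable fun x => Complex.normSq (φ p x) := by
    intro p
    by_contra h
    have := hφnorm p
    rw [integral_undef h] at this
    norm_num at this
  have hInt_Kp : ∀ p, Integrable (SqrtH1.Kp φ p) := fun p => hφgrad p
  -- lintegral of Sn
  have hLSn : ∫⁻ x, SqrtH1.Sn ρ φ x = ENNReal.ofReal (∑' p, ρ p) := by
    simp only [SqrtH1.Sn]
    rw [lintegral_tsum fun p =>
      (((hmeas_ns p).const_mul (ρ p)).ennreal_ofReal).aemeasurable]
    have h1 : ∀ p, ∫⁻ x, ENNReal.ofReal (ρ p * Complex.normSq (φ p x)) = ENNReal.ofReal (ρ p) := by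
      intro p
      rw [← ofReal_integral_eq_lintegral_ofReal ((hInt_ns p).const_mul (ρ p))
        (ae_of_all _ fun x => hterm_nonneg x p), integral_const_mul, hφnorm p, mul_one]
    simp only [h1]
    exact (ENNReal.ofReal_tsum_of_nonneg hρ htr).symm
  have haeSn : ∀ᵐ x, SqrtH1.Sn ρ φ x < ⊤ :=
    ae_lt_top hmeas_Sn (by rw [hLSn]; exact ENNReal.ofReal_ne_top)
  have hIntn' : Integrable fun x => (SqrtH1.Sn ρ φ x).toReal :=
    integrable_toReal_of_lintegral_ne_top hmeas_Sn.aemeasurable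
      (by rw [hLSn]; exact ENNReal.ofReal_ne_top)
  -- lintegral of SK
  have hkin_nonneg : ∀ p, 0 ≤ ρ p * ∫ x, SqrtH1.Kp φ p x :=
    fun p => mul_nonneg (hρ p) (integral_nonneg fun x => hKp_nonneg p x)
  have hLSK : ∫⁻ x, SqrtH1.SK ρ φ x = ENNReal.ofReal (∑' p, ρ p * ∫ x, SqrtH1.Kp φ p x) := by
    simp only [SqrtH1.SK]
    rw [lintegral_tsum fun p =>
      (((hmeas_Kp p).const_mul (ρ p)).ennreal_ofReal).aemeasurable]
    have h1 : ∀ p, ∫⁻ x, ENNReal.ofReal (ρ p * SqrtH1.Kp φ p x)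
        = ENNReal.ofReal (ρ p * ∫ x, SqrtH1.Kp φ p x) := by
      intro p
      rw [← ofReal_integral_eq_lintegral_ofReal ((hInt_Kp p).const_mul (ρ p))
        (ae_of_all _ fun x => mul_nonneg (hρ p) (hKp_nonneg p x)), integral_const_mul]
    simp only [h1]
    exact (ENNReal.ofReal_tsum_of_nonneg hkin_nonneg hkin).symm
  have haeSK : ∀ᵐ x, SqrtH1.SK ρ φ x < ⊤ :=
    ae_lt_top hmeas_SK (by rw [hLSK]; exact ENNReal.ofReal_ne_top)
  have hKtotInt : Integrable fun x => (SqrtH1.SK ρ φ x).toReal :=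
    integrable_toReal_of_lintegral_ne_top hmeas_SK.aemeasurable
      (by rw [hLSK]; exact ENNReal.ofReal_ne_top)
  have hKtotInteg : ∫ x, (SqrtH1.SK ρ φ x).toReal = ∑' p, ρ p * ∫ x, SqrtH1.Kp φ p x := by
    rw [integral_toReal hmeas_SK.aemeasurable haeSK, hLSK,
      ENNReal.toReal_ofReal (tsum_nonneg hkin_nonneg)]
  -- shared summability facts
  have hsum_ns : ∀ x, SqrtH1.Sn ρ φ x < ⊤ → Summable fun p => ρ p * Complex.normSq (φ p x) := by
    intro x hx
    refine (ENNReal.summable_toReal (f := fun p => ENNReal.ofReal (ρ p * Complex.normSq (φ p x)))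
      hx.ne).congr fun p => ?_
    rw [ENNReal.toReal_ofReal (hterm_nonneg x p)]
  have hsum_K : ∀ x, SqrtH1.SK ρ φ x < ⊤ → Summable fun p => ρ p * SqrtH1.Kp φ p x := by
    intro x hx
    refine (ENNReal.summable_toReal (f := fun p => ENNReal.ofReal (ρ p * SqrtH1.Kp φ p x))
      hx.ne).congr fun p => ?_
    rw [ENNReal.toReal_ofReal (mul_nonneg (hρ p) (hKp_nonneg p x))]
  have hKeq : ∀ x, SqrtH1.SK ρ φ x < ⊤ →
      ∑' p, ρ p * SqrtH1.Kp φ p x = (SqrtH1.SK ρ φ x).toReal := fun x _ =>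
    aux_tsum_toReal (fun p => mul_nonneg (hρ p) (hKp_nonneg p x))
  have hFNtend : ∀ x, SqrtH1.Sn ρ φ x < ⊤ →
      Tendsto (fun N => SqrtH1.FN ρ φ N x) atTop (𝓝 (Real.sqrt ((SqrtH1.Sn ρ φ x).toReal))) := by
    intro x hx
    have hε : Tendsto (fun N : ℕ => (((N:ℝ)+1)⁻¹)^2) atTop (𝓝 0) := by
      have h0 : Tendsto (fun N : ℕ => ((N:ℝ)+1)⁻¹) atTop (𝓝 0) :=
        tendsto_inv_atTop_zero.comp (tendsto_atTop_add_const_right _ 1 tendsto_natCast_atTop_atTop)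
      simpa using h0.pow 2
    have hu : Tendsto (fun N => SqrtH1.uN ρ φ N x) atTop (𝓝 ((SqrtH1.Sn ρ φ x).toReal)) := by
      have h1 := (hsum_ns x hx).hasSum.tendsto_sum_nat
      rw [hn'eq x] at h1
      exact h1
    have hsum2 := hε.add hu
    rw [zero_add] at hsum2
    exact (Real.continuous_sqrt.tendsto _).comp hsum2
  -- measurability of g
  have hgmeas : Measurable (SqrtH1.gF ρ φ) := by
    refine measurable_pi_lambda _ fun i => ?_
    have hvAm : ∀ p, Measurable fun x => SqrtH1.vA ρ φ p i x := by
      intro p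
      apply Measurable.div_const
      apply Measurable.const_mul
      exact (((Complex.measurable_re.comp (hφmeas p)).add
          (Complex.measurable_re.comp (hmeas_fd p i))).pow_const 2).add
        (((Complex.measurable_im.comp (hφmeas p)).add
          (Complex.measurable_im.comp (hmeas_fd p i))).pow_const 2)
    have hvBm : ∀ p, Measurable fun x => SqrtH1.vB ρ φ p i x := by
      intro p
      apply Measurable.div_const
      apply Measurable.const_mul
      exact (((Complex.measurable_re.comp (hφmeas p)).sub
          (Complex.measurable_re.comp (hmeas_fd p i))).pow_const 2).add
        (((Complex.measurable_im.comp (hφmeas p)).sub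
          (Complex.measurable_im.comp (hmeas_fd p i))).pow_const 2)
    simp only [SqrtH1.gF]
    refine Measurable.div (Measurable.sub ?_ ?_) (Real.continuous_sqrt.measurable.comp
      hmeas_Sn.ennreal_toReal)
    · exact (Measurable.ennreal_tsum fun p => (hvAm p).ennreal_ofReal).ennreal_toReal
    · exact (Measurable.ennreal_tsum fun p => (hvBm p).ennreal_ofReal).ennreal_toReal
  -- the per-point analysis of g, shared between weak-gradient and final bound
  have hgzero : ∀ x, (SqrtH1.Sn ρ φ x).toReal = 0 → ∀ i, SqrtH1.gF ρ φ x i = 0 := by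
    intro x hzero i
    simp only [SqrtH1.gF, hzero, Real.sqrt_zero, div_zero]
  have hgood : ∀ x, SqrtH1.Sn ρ φ x < ⊤ → SqrtH1.SK ρ φ x < ⊤ →
      (SqrtH1.Sn ρ φ x).toReal ≠ 0 → ∀ i : Fin d,
      Summable (fun p => ρ p * SqrtH1.wpi φ p i x) ∧
      SqrtH1.gF ρ φ x i
        = (∑' p, ρ p * SqrtH1.wpi φ p i x) / Real.sqrt ((SqrtH1.Sn ρ φ x).toReal) := by
    intro x hx1 hx2 hzero i
    have hsns := hsum_ns x hx1
    have hsK := hsum_K x hx2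
    have hsAB : Summable fun p => (ρ p * Complex.normSq (φ p x) + ρ p * SqrtH1.Kp φ p x)/2 :=
      (hsns.add hsK).div_const 2
    have hsA : Summable fun p => SqrtH1.vA ρ φ p i x :=
      Summable.of_nonneg_of_le (fun p => SqrtH1.vA_nonneg ρ hρ φ p i x)
        (fun p => SqrtH1.vA_le ρ hρ φ p i x) hsAB
    have hsB : Summable fun p => SqrtH1.vB ρ φ p i x :=
      Summable.of_nonneg_of_le (fun p => SqrtH1.vB_nonneg ρ hρ φ p i x)
        (fun p => SqrtH1.vB_le ρ hρ φ p i x) hsAB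
    have hsw : Summable fun p => ρ p * SqrtH1.wpi φ p i x := by
      refine (hsA.sub hsB).congr fun p => ?_
      rw [SqrtH1.vA_sub_vB ρ φ p i x, SqrtH1.wpi]
    refine ⟨hsw, ?_⟩
    simp only [SqrtH1.gF]
    congr 1
    rw [← aux_tsum_toReal (fun p => SqrtH1.vA_nonneg ρ hρ φ p i x),
      ← aux_tsum_toReal (fun p => SqrtH1.vB_nonneg ρ hρ φ p i x), ← Summable.tsum_sub hsA hsB]
    exact (tsum_congr fun p => by rw [SqrtH1.vA_sub_vB ρ φ p i x, SqrtH1.wpi]).symm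
  refine ⟨?_, SqrtH1.gF ρ φ, hgmeas, ?_, ?_⟩
  · -- Memℒp
    have hsqrtmeas : Measurable fun x => Real.sqrt ((SqrtH1.Sn ρ φ x).toReal) :=
      Real.continuous_sqrt.measurable.comp hmeas_Sn.ennreal_toReal
    rw [memLp_two_iff_integrable_sq hsqrtmeas.aestronglyMeasurable]
    exact hIntn'.congr (ae_of_all _ fun x => (Real.sq_sqrt ENNReal.toReal_nonneg).symm)
  · -- weak gradient
    intro ψ hψ hψsupp i
    have hψcont : Continuous ψ := hψ.continuous
    have hψdiff : Differentiable ℝ ψ := hψ.differentiable (by simp)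
    have hdψcont : Continuous fun x => fderiv ℝ ψ x (EuclideanSpace.single i 1) :=
      (hψ.continuous_fderiv (by simp)).clm_apply continuous_const
    have hdψsupp : HasCompactSupport fun x => fderiv ℝ ψ x (EuclideanSpace.single i 1) :=
      hψsupp.fderiv_apply ℝ (EuclideanSpace.single i 1)
    obtain ⟨Cψ, hCψ⟩ := hψcont.bounded_above_of_compact_support hψsupp
    obtain ⟨Cdψ, hCdψ⟩ := hdψcont.bounded_above_of_compact_support hdψsupp
    have hInt_nsfd : ∀ p, Integrable fun x =>
        Complex.normSq (fderiv ℝ (φ p) x (EuclideanSpace.single i 1)) := by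
      intro p
      refine (hInt_Kp p).mono'
        ((Complex.continuous_normSq.measurable.comp (hmeas_fd p i)).aestronglyMeasurable)
        (ae_of_all _ fun x => ?_)
      rw [Real.norm_of_nonneg (Complex.normSq_nonneg _)]
      exact SqrtH1.normSq_single_le_Kp φ p i x
    have hIntkNi : ∀ N, Integrable fun x => SqrtH1.kNi ρ φ N i x := by
      intro N
      simp only [SqrtH1.kNi]
      exact integrable_finset_sum _ fun p _ => (hInt_nsfd p).const_mul (ρ p)
    have hFNcont : ∀ N, Continuous (SqrtH1.FN ρ φ N) := fun N =>
      (SqrtH1.FN_differentiable ρ φ hρ hφdiff N).continuous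
    have hIfψ : ∀ N, Integrable fun x => SqrtH1.FN ρ φ N x * ψ x := fun N =>
      ((hFNcont N).mul hψcont).integrable_of_hasCompactSupport hψsupp.mul_left
    have hIfdψ : ∀ N, Integrable fun x =>
        SqrtH1.FN ρ φ N x * fderiv ℝ ψ x (EuclideanSpace.single i 1) := fun N =>
      ((hFNcont N).mul hdψcont).integrable_of_hasCompactSupport hdψsupp.mul_left
    have hIDψ : ∀ N, Integrable fun x =>
        fderiv ℝ (SqrtH1.FN ρ φ N) x (EuclideanSpace.single i 1) * ψ x := by
      intro N
      refine Integrable.mono'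
        (g := fun x => (‖ψ x‖ + ‖ψ x‖ * SqrtH1.kNi ρ φ N i x) / 2) ?_ ?_ ?_
      · refine Integrable.div_const (Integrable.add
          (hψcont.norm.integrable_of_hasCompactSupport hψsupp.norm) ?_) 2
        exact (hIntkNi N).bdd_mul hψcont.norm.aestronglyMeasurable
          (ae_of_all _ fun x => by rw [norm_norm]; exact hCψ x)
      · exact ((measurable_fderiv_apply_const ℝ (SqrtH1.FN ρ φ N) _).mul
          hψcont.measurable).aestronglyMeasurable
      · refine ae_of_all _ fun x => ?_
        rw [norm_mul]
        have h1 := SqrtH1.abs_fderiv_FN_le ρ φ hρ hφdiff N i x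
        have h2 : Real.sqrt (SqrtH1.kNi ρ φ N i x) ≤ (1 + SqrtH1.kNi ρ φ N i x)/2 :=
          aux_sqrt_le_half _ (SqrtH1.kNi_nonneg ρ φ hρ N i x)
        calc ‖fderiv ℝ (SqrtH1.FN ρ φ N) x (EuclideanSpace.single i 1)‖ * ‖ψ x‖
            ≤ ((1 + SqrtH1.kNi ρ φ N i x)/2) * ‖ψ x‖ := by
              apply mul_le_mul_of_nonneg_right _ (norm_nonneg _)
              rw [Real.norm_eq_abs]
              exact h1.trans h2
          _ = (‖ψ x‖ + ‖ψ x‖ * SqrtH1.kNi ρ φ N i x)/2 := by ring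
    have hIBP : ∀ N, ∫ x, SqrtH1.FN ρ φ N x * fderiv ℝ ψ x (EuclideanSpace.single i 1)
        = - ∫ x, fderiv ℝ (SqrtH1.FN ρ φ N) x (EuclideanSpace.single i 1) * ψ x := fun N =>
      integral_mul_fderiv_eq_neg_fderiv_mul_of_integrable (hIDψ N) (hIfdψ N) (hIfψ N)
        (fun x _ => SqrtH1.FN_differentiable ρ φ hρ hφdiff N x) (fun x _ => hψdiff x)
    have hlim1 : Tendsto (fun N => ∫ x, SqrtH1.FN ρ φ N x
          * fderiv ℝ ψ x (EuclideanSpace.single i 1)) atTop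
        (𝓝 (∫ x, Real.sqrt ((SqrtH1.Sn ρ φ x).toReal)
          * fderiv ℝ ψ x (EuclideanSpace.single i 1))) := by
      refine tendsto_integral_of_dominated_convergence
        (fun x => ‖fderiv ℝ ψ x (EuclideanSpace.single i 1)‖
          + ‖fderiv ℝ ψ x (EuclideanSpace.single i 1)‖ * (SqrtH1.Sn ρ φ x).toReal)
        (fun N => ((hFNcont N).mul hdψcont).aestronglyMeasurable) ?_ ?_ ?_
      · refine Integrable.add (hdψcont.norm.integrable_of_hasCompactSupport hdψsupp.norm) ?_
        exact hIntn'.bdd_mul hdψcont.norm.aestronglyMeasurable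
          (ae_of_all _ fun x => by rw [norm_norm]; exact hCdψ x)
      · intro N
        filter_upwards [haeSn] with x hx
        rw [norm_mul]
        have huNle : SqrtH1.uN ρ φ N x ≤ (SqrtH1.Sn ρ φ x).toReal := by
          rw [← hn'eq x]
          exact Summable.sum_le_tsum (Finset.range N) (fun p _ => hterm_nonneg x p) (hsum_ns x hx)
        have hFle : SqrtH1.FN ρ φ N x ≤ 1 + (SqrtH1.Sn ρ φ x).toReal := by
          rw [SqrtH1.FN]
          refine aux_sqrt_le_one_add _ _ ENNReal.toReal_nonneg ?_
          have := aux_inv_sq_le_one N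
          linarith
        have hFnn : 0 ≤ SqrtH1.FN ρ φ N x := (SqrtH1.FN_pos ρ φ hρ N x).le
        calc ‖SqrtH1.FN ρ φ N x‖ * ‖fderiv ℝ ψ x (EuclideanSpace.single i 1)‖
            ≤ (1 + (SqrtH1.Sn ρ φ x).toReal)
              * ‖fderiv ℝ ψ x (EuclideanSpace.single i 1)‖ := by
              apply mul_le_mul_of_nonneg_right _ (norm_nonneg _)
              rw [Real.norm_of_nonneg hFnn]
              exact hFle
          _ = ‖fderiv ℝ ψ x (EuclideanSpace.single i 1)‖
              + ‖fderiv ℝ ψ x (EuclideanSpace.single i 1)‖ * (SqrtH1.Sn ρ φ x).toReal := by ring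
      · filter_upwards [haeSn] with x hx
        exact (hFNtend x hx).mul_const _
    have hlim2 : Tendsto (fun N => ∫ x,
          fderiv ℝ (SqrtH1.FN ρ φ N) x (EuclideanSpace.single i 1) * ψ x) atTop
        (𝓝 (∫ x, SqrtH1.gF ρ φ x i * ψ x)) := by
      refine tendsto_integral_of_dominated_convergence
        (fun x => (‖ψ x‖ + ‖ψ x‖ * (SqrtH1.SK ρ φ x).toReal)/2)
        (fun N => ((measurable_fderiv_apply_const ℝ (SqrtH1.FN ρ φ N) _).mul
          hψcont.measurable).aestronglyMeasurable) ?_ ?_ ?_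
      · refine Integrable.div_const (Integrable.add
          (hψcont.norm.integrable_of_hasCompactSupport hψsupp.norm) ?_) 2
        exact hKtotInt.bdd_mul hψcont.norm.aestronglyMeasurable
          (ae_of_all _ fun x => by rw [norm_norm]; exact hCψ x)
      · intro N
        filter_upwards [haeSK] with x hx
        rw [norm_mul]
        have hkle : SqrtH1.kNi ρ φ N i x ≤ (SqrtH1.SK ρ φ x).toReal := by
          have h1 : SqrtH1.kNi ρ φ N i x ≤ ∑ p ∈ Finset.range N, ρ p * SqrtH1.Kp φ p x :=
            Finset.sum_le_sum fun p _ =>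
              mul_le_mul_of_nonneg_left (SqrtH1.normSq_single_le_Kp φ p i x) (hρ p)
          have h2 : ∑ p ∈ Finset.range N, ρ p * SqrtH1.Kp φ p x
              ≤ (SqrtH1.SK ρ φ x).toReal := by
            rw [← hKeq x hx]
            exact Summable.sum_le_tsum (Finset.range N)
              (fun p _ => mul_nonneg (hρ p) (hKp_nonneg p x)) (hsum_K x hx)
          linarith
        have h1 := (SqrtH1.abs_fderiv_FN_le ρ φ hρ hφdiff N i x).trans
          ((Real.sqrt_le_sqrt hkle).trans (aux_sqrt_le_half _ ENNReal.toReal_nonneg))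
        calc ‖fderiv ℝ (SqrtH1.FN ρ φ N) x (EuclideanSpace.single i 1)‖ * ‖ψ x‖
            ≤ ((1 + (SqrtH1.SK ρ φ x).toReal)/2) * ‖ψ x‖ := by
              apply mul_le_mul_of_nonneg_right _ (norm_nonneg _)
              rw [Real.norm_eq_abs]
              exact h1
          _ = (‖ψ x‖ + ‖ψ x‖ * (SqrtH1.SK ρ φ x).toReal)/2 := by ring
      · filter_upwards [haeSn, haeSK] with x hx1 hx2
        by_cases hzero : (SqrtH1.Sn ρ φ x).toReal = 0
        · have hterm0 : ∀ p, ρ p * Complex.normSq (φ p x) = 0 := by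
            intro p
            have hle := Summable.le_tsum (hsum_ns x hx1) p (fun q _ => hterm_nonneg x q)
            rw [hn'eq x, hzero] at hle
            exact le_antisymm hle (hterm_nonneg x p)
          have hw0 : ∀ p, ρ p * SqrtH1.wpi φ p i x = 0 := by
            intro p
            rcases mul_eq_zero.1 (hterm0 p) with h | h
            · rw [h, zero_mul]
            · have hφ0 : φ p x = 0 := Complex.normSq_eq_zero.mp h
              simp [SqrtH1.wpi, hφ0]
          have hDN0 : ∀ N, fderiv ℝ (SqrtH1.FN ρ φ N) x (EuclideanSpace.single i 1) = 0 := by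
            intro N
            rw [SqrtH1.fderiv_FN_apply ρ φ hρ hφdiff N i x, SqrtH1.hN,
              Finset.sum_eq_zero fun p _ => hw0 p, zero_div]
          have hg0 := hgzero x hzero i
          simp only [hDN0, hg0, zero_mul]
          exact tendsto_const_nhds
        · obtain ⟨hsw, hgx⟩ := hgood x hx1 hx2 hzero i
          have hn'pos : 0 < (SqrtH1.Sn ρ φ x).toReal :=
            lt_of_le_of_ne ENNReal.toReal_nonneg (Ne.symm hzero)
          have hhN : Tendsto (fun N => SqrtH1.hN ρ φ N i x) atTop
              (𝓝 (∑' p, ρ p * SqrtH1.wpi φ p i x)) := hsw.hasSum.tendsto_sum_nat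
          have hsqrtpos : Real.sqrt ((SqrtH1.Sn ρ φ x).toReal) ≠ 0 :=
            (Real.sqrt_pos.mpr hn'pos).ne'
          have hDN : Tendsto (fun N =>
              fderiv ℝ (SqrtH1.FN ρ φ N) x (EuclideanSpace.single i 1)) atTop
              (𝓝 (SqrtH1.gF ρ φ x i)) := by
            rw [hgx]
            refine (hhN.div (hFNtend x hx1) hsqrtpos).congr fun N => ?_
            rw [SqrtH1.fderiv_FN_apply ρ φ hρ hφdiff N i x]
            simp only [Pi.div_apply]
          exact hDN.mul_const _
    refine tendsto_nhds_unique hlim1 ((hlim2.neg).congr fun N => (hIBP N).symm)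
  · -- final bound
    have haeG2 : ∀ᵐ x, ∑ i, (SqrtH1.gF ρ φ x i)^2 ≤ (SqrtH1.SK ρ φ x).toReal := by
      filter_upwards [haeSn, haeSK] with x hx1 hx2
      have hki_sum : ∀ i : Fin d, Summable fun p =>
          ρ p * Complex.normSq (fderiv ℝ (φ p) x (EuclideanSpace.single i 1)) := fun i =>
        Summable.of_nonneg_of_le (fun p => mul_nonneg (hρ p) (Complex.normSq_nonneg _))
          (fun p => mul_le_mul_of_nonneg_left (SqrtH1.normSq_single_le_Kp φ p i x) (hρ p))
          (hsum_K x hx2)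
      have hstep : ∀ i : Fin d, (SqrtH1.gF ρ φ x i)^2
          ≤ ∑' p, ρ p * Complex.normSq (fderiv ℝ (φ p) x (EuclideanSpace.single i 1)) := by
        intro i
        by_cases hzero : (SqrtH1.Sn ρ φ x).toReal = 0
        · rw [hgzero x hzero i]
          simpa using tsum_nonneg (fun p : ℕ =>
            mul_nonneg (hρ p) (Complex.normSq_nonneg
              (fderiv ℝ (φ p) x (EuclideanSpace.single i 1))))
        · obtain ⟨hsw, hgx⟩ := hgood x hx1 hx2 hzero i
          have hn'pos : 0 < (SqrtH1.Sn ρ φ x).toReal :=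
            lt_of_le_of_ne ENNReal.toReal_nonneg (Ne.symm hzero)
          have hhN : Tendsto (fun N => SqrtH1.hN ρ φ N i x) atTop
              (𝓝 (∑' p, ρ p * SqrtH1.wpi φ p i x)) := hsw.hasSum.tendsto_sum_nat
          have hNb : ∀ N, (SqrtH1.hN ρ φ N i x)^2 ≤ (SqrtH1.Sn ρ φ x).toReal
              * (∑' p, ρ p * Complex.normSq (fderiv ℝ (φ p) x (EuclideanSpace.single i 1))) := by
            intro N
            refine le_trans (SqrtH1.hN_sq_le ρ φ hρ N i x) ?_
            have huNle : SqrtH1.uN ρ φ N x ≤ (SqrtH1.Sn ρ φ x).toReal := by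
              rw [← hn'eq x]
              exact Summable.sum_le_tsum (Finset.range N) (fun p _ => hterm_nonneg x p) (hsum_ns x hx1)
            have hkNile : SqrtH1.kNi ρ φ N i x
                ≤ ∑' p, ρ p * Complex.normSq (fderiv ℝ (φ p) x (EuclideanSpace.single i 1)) := by
              rw [SqrtH1.kNi]
              exact Summable.sum_le_tsum (Finset.range N)
                (fun p _ => mul_nonneg (hρ p) (Complex.normSq_nonneg _)) (hki_sum i)
            exact mul_le_mul huNle hkNile (SqrtH1.kNi_nonneg ρ φ hρ N i x) ENNReal.toReal_nonneg
          have hT2 : (∑' p, ρ p * SqrtH1.wpi φ p i x)^2 ≤ (SqrtH1.Sn ρ φ x).toReal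
              * (∑' p, ρ p * Complex.normSq (fderiv ℝ (φ p) x (EuclideanSpace.single i 1))) :=
            le_of_tendsto (hhN.pow 2) (Filter.Eventually.of_forall hNb)
          rw [hgx, div_pow, Real.sq_sqrt ENNReal.toReal_nonneg, div_le_iff₀ hn'pos]
          calc (∑' p, ρ p * SqrtH1.wpi φ p i x)^2
              ≤ (SqrtH1.Sn ρ φ x).toReal * (∑' p, ρ p
                * Complex.normSq (fderiv ℝ (φ p) x (EuclideanSpace.single i 1))) := hT2
            _ = (∑' p, ρ p * Complex.normSq (fderiv ℝ (φ p) x (EuclideanSpace.single i 1)))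
                * (SqrtH1.Sn ρ φ x).toReal := by ring
      calc ∑ i, (SqrtH1.gF ρ φ x i)^2
          ≤ ∑ i, ∑' p, ρ p * Complex.normSq (fderiv ℝ (φ p) x (EuclideanSpace.single i 1)) :=
            Finset.sum_le_sum fun i _ => hstep i
        _ = ∑' p, ∑ i, ρ p * Complex.normSq (fderiv ℝ (φ p) x (EuclideanSpace.single i 1)) :=
            (Summable.tsum_finsetSum fun i _ => hki_sum i).symm
        _ = ∑' p, ρ p * SqrtH1.Kp φ p x := tsum_congr fun p => by
            rw [SqrtH1.Kp, Finset.mul_sum]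
        _ = (SqrtH1.SK ρ φ x).toReal := hKeq x hx2
    have hG2meas : Measurable fun x => ∑ i, (SqrtH1.gF ρ φ x i)^2 :=
      Finset.measurable_sum _ fun i _ => ((measurable_pi_apply i).comp hgmeas).pow_const 2
    have hIntG2 : Integrable fun x => ∑ i, (SqrtH1.gF ρ φ x i)^2 := by
      refine hKtotInt.mono' hG2meas.aestronglyMeasurable ?_
      filter_upwards [haeG2] with x hx
      rw [Real.norm_of_nonneg (Finset.sum_nonneg fun i _ => sq_nonneg _)]
      exact hx
    have hmain := integral_mono_ae hIntG2 hKtotInt haeG2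
    rw [hKtotInteg] at hmain
    have htr_nonneg : (0:ℝ) ≤ ∑' p, ρ p := tsum_nonneg hρ
    have hrfl : (∑' p, ρ p * ∫ x, SqrtH1.Kp φ p x) = ∑' p, ρ p * ∫ x,
        ∑ i, Complex.normSq (fderiv ℝ (φ p) x (EuclideanSpace.single i 1)) := rfl
    rw [hrfl] at hmain
    linarith
end

section
/- Let H be a self-adjoint operator on L²(ℝᵈ) with purely discrete spectrum and nondecreasing eigenvalues {λ_j} (with orthonormal eigenbasis), and let ρ ∈ 𝓔⁺ be a density operator with nonincreasing eigenvalues {ρ_j} such that Tr(√H ρ √H) < ∞. Then Σ_j λ_j ρ_j ≤ Tr(√H ρ √H). -/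
/-!
Put `P j k = |⟨e k, ψ j⟩|²`. By Parseval every row of `P` sums to `1`, by Bessel every column
sums to at most `1`. For such a matrix and nondecreasing `λ`, the bathtub principle gives
`∑_{j<N} λ_j ≤ ∑_{j<N} ∑_k λ_k P j k` for every `N`, and Abel summation against the nonincreasing
weights `ρ_j` turns these partial-sum inequalities into the claim. Working in `ℝ≥0∞` removes all
summability side conditions.
-/

open scoped ENNReal
open Finset

namespace ENNReal

theorem sum_range_mul_le_sum_range_mul_of_antitone {r a b : ℕ → ℝ≥0∞} (hr : Antitone r)
    (hba : ∀ n, ∑ j ∈ range n, b j ≤ ∑ j ∈ range n, a j) (N : ℕ) :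
    ∑ j ∈ range N, r j * b j ≤ ∑ j ∈ range N, r j * a j := by
  induction N generalizing r with
  | zero => simp
  | succ N ih =>
    -- peel off the smallest weight `r N`; the remaining weights `r j - r N` are still antitone
    have split (x : ℕ → ℝ≥0∞) : ∑ j ∈ range (N + 1), r j * x j
        = r N * ∑ j ∈ range (N + 1), x j + ∑ j ∈ range N, (r j - r N) * x j := by
      calc ∑ j ∈ range (N + 1), r j * x j
          = ∑ j ∈ range N, ((r j - r N) * x j + r N * x j) + r N * x N := by
            rw [sum_range_succ]
            refine congrArg (· + _) (sum_congr rfl fun j hj => ?_)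
            rw [← add_mul, tsub_add_cancel_of_le (hr (mem_range.1 hj).le)]
        _ = _ := by rw [sum_add_distrib, ← mul_sum, sum_range_succ]; ring
    rw [split b, split a]
    exact add_le_add (mul_le_mul_right (hba _) _)
      (ih fun i j hij => tsub_le_tsub_right (hr hij) _)

theorem sum_range_le_tsum_mul_of_monotone {L t : ℕ → ℝ≥0∞} (hL : Monotone L)
    (ht : ∀ k, t k ≤ 1) {N : ℕ} (hN : (N : ℝ≥0∞) ≤ ∑' k, t k) :
    ∑ k ∈ range N, L k ≤ ∑' k, L k * t k := by
  -- the mass `1 - t k` missing below `N` sits above `N`, where `L` is at least `L N`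
  have htail : ∑ k ∈ range N, (1 - t k) ≤ ∑' k, t (k + N) := by
    have hfin : ∑ k ∈ range N, t k ≠ ∞ :=
      sum_ne_top.2 fun k _ => ne_top_of_le_ne_top one_ne_top (ht k)
    rw [← ENNReal.add_le_add_iff_left hfin, ← sum_add_distrib,
      ENNReal.summable.sum_add_tsum_nat_add']
    simpa [add_tsub_cancel_of_le (ht _)] using hN
  calc ∑ k ∈ range N, L k = ∑ k ∈ range N, (L k * t k + L k * (1 - t k)) := by
        refine sum_congr rfl fun k _ => ?_
        rw [← mul_add, add_tsub_cancel_of_le (ht k), mul_one]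
    _ ≤ ∑ k ∈ range N, L k * t k + ∑ k ∈ range N, L N * (1 - t k) := by
        rw [sum_add_distrib]
        gcongr with k hk
        exact hL (mem_range.1 hk).le
    _ ≤ ∑ k ∈ range N, L k * t k + ∑' k, L N * t (k + N) := by
        rw [← mul_sum, ENNReal.tsum_mul_left]
        gcongr
    _ ≤ ∑ k ∈ range N, L k * t k + ∑' k, L (k + N) * t (k + N) := by
        gcongr with k
        exact hL (Nat.le_add_left N k)
    _ = ∑' k, L k * t k := ENNReal.summable.sum_add_tsum_nat_add'

theorem sum_range_le_sum_range_tsum_mul {L : ℕ → ℝ≥0∞} {P : ℕ → ℕ → ℝ≥0∞} (hL : Monotone L)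
    (hrow : ∀ j, 1 ≤ ∑' k, P j k) (hcol : ∀ k, ∑' j, P j k ≤ 1) (N : ℕ) :
    ∑ j ∈ range N, L j ≤ ∑ j ∈ range N, ∑' k, L k * P j k := by
  have hswap : ∑ j ∈ range N, ∑' k, L k * P j k = ∑' k, L k * ∑ j ∈ range N, P j k := by
    simp_rw [mul_sum]
    exact (Summable.tsum_finsetSum fun _ _ => ENNReal.summable).symm
  rw [hswap]
  refine sum_range_le_tsum_mul_of_monotone hL
    (fun k => (ENNReal.sum_le_tsum _).trans (hcol k)) ?_
  rw [Summable.tsum_finsetSum fun _ _ => ENNReal.summable]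
  simpa using sum_le_sum fun j (_ : j ∈ range N) => hrow j

theorem tsum_mul_le_tsum_mul_tsum_mul {r L : ℕ → ℝ≥0∞} {P : ℕ → ℕ → ℝ≥0∞} (hr : Antitone r)
    (hL : Monotone L) (hrow : ∀ j, 1 ≤ ∑' k, P j k) (hcol : ∀ k, ∑' j, P j k ≤ 1) :
    ∑' j, r j * L j ≤ ∑' j, r j * ∑' k, L k * P j k := by
  rw [ENNReal.tsum_eq_iSup_nat, ENNReal.tsum_eq_iSup_nat]
  exact iSup_mono <| sum_range_mul_le_sum_range_mul_of_antitone hr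
    (sum_range_le_sum_range_tsum_mul hL hrow hcol)

end ENNReal

section

variable {ι 𝕜 E : Type*} [RCLike 𝕜] [NormedAddCommGroup E] [InnerProductSpace 𝕜 E]

theorem HilbertBasis.tsum_enorm_inner_sq (b : HilbertBasis ι 𝕜 E) (x : E) :
    ∑' i, ‖(inner 𝕜 (b i) x : 𝕜)‖ₑ ^ 2 = ‖x‖ₑ ^ 2 := by
  have hsum : HasSum (fun i => ‖(inner 𝕜 (b i) x : 𝕜)‖ ^ 2) (‖x‖ ^ 2) := by
    have hterm (i : ι) :
        ‖(inner 𝕜 (b i) x : 𝕜)‖ ^ 2 = RCLike.re (inner 𝕜 x (b i) * inner 𝕜 (b i) x) := by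
      rw [← inner_conj_symm x (b i), RCLike.conj_mul]
      norm_cast
    simp_rw [hterm, ← inner_self_eq_norm_sq (𝕜 := 𝕜) x]
    exact RCLike.reCLM.hasSum (b.hasSum_inner_mul_inner x x)
  simp_rw [← ofReal_norm, ← ENNReal.ofReal_pow (norm_nonneg _)]
  rw [← ENNReal.ofReal_tsum_of_nonneg (fun _ => by positivity) hsum.summable, hsum.tsum_eq]

theorem Orthonormal.tsum_enorm_inner_sq_le {v : ι → E} (hv : Orthonormal 𝕜 v) (x : E) :
    ∑' i, ‖(inner 𝕜 (v i) x : 𝕜)‖ₑ ^ 2 ≤ ‖x‖ₑ ^ 2 := by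
  simp_rw [← ofReal_norm, ← ENNReal.ofReal_pow (norm_nonneg _)]
  rw [← ENNReal.ofReal_tsum_of_nonneg (fun _ => by positivity) (hv.inner_products_summable x)]
  exact ENNReal.ofReal_le_ofReal (hv.tsum_inner_products_le x)

end

theorem stmt6_general {H : Type*} [NormedAddCommGroup H] [InnerProductSpace ℂ H] [CompleteSpace H]
    (e : HilbertBasis ℕ ℂ H) (ψ : ℕ → H) (hψ : Orthonormal ℂ ψ)
    (lam ρ : ℕ → ℝ) (hlam : Monotone lam)
    (hρ : Antitone ρ) (hρ0 : ∀ j, 0 ≤ ρ j) :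
    ∑' j, ENNReal.ofReal (lam j * ρ j)
      ≤ ∑' j, ENNReal.ofReal (ρ j)
          * ∑' k, ENNReal.ofReal (lam k) * (‖(inner ℂ (e k) (ψ j) : ℂ)‖₊ : ℝ≥0∞) ^ 2 := by
  have hrow (j : ℕ) : 1 ≤ ∑' k, (‖(inner ℂ (e k) (ψ j) : ℂ)‖₊ : ℝ≥0∞) ^ 2 := by
    simp only [← enorm_eq_nnnorm]
    rw [e.tsum_enorm_inner_sq, ← ofReal_norm, hψ.1 j]
    simp
  have hcol (k : ℕ) : ∑' j, (‖(inner ℂ (e k) (ψ j) : ℂ)‖₊ : ℝ≥0∞) ^ 2 ≤ 1 := by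
    have hbessel := hψ.tsum_enorm_inner_sq_le (e k)
    simp only [← enorm_eq_nnnorm, ← ofReal_norm, e.orthonormal.1 k] at hbessel ⊢
    simpa [norm_inner_symm] using hbessel
  calc ∑' j, ENNReal.ofReal (lam j * ρ j)
        = ∑' j, ENNReal.ofReal (ρ j) * ENNReal.ofReal (lam j) :=
        tsum_congr fun j => by rw [mul_comm, ENNReal.ofReal_mul (hρ0 j)]
    _ ≤ _ := ENNReal.tsum_mul_le_tsum_mul_tsum_mul (ENNReal.ofReal_mono.comp_antitone hρ)
        (ENNReal.ofReal_mono.comp hlam) hrow hcol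

/-- Min-max trace inequality: if `H` has nondecreasing eigenvalues `λ_j` with orthonormal
eigenbasis `e` and `ρ` has nonincreasing eigenvalues `ρ_j` with orthonormal eigenvectors `ψ_j`,
then `Σ_j λ_j ρ_j ≤ Tr(√H ρ √H) = Σ_j ρ_j Σ_k λ_k |⟨e_k, ψ_j⟩|²`. -/
theorem stmt6 {H : Type*} [NormedAddCommGroup H] [InnerProductSpace ℂ H] [CompleteSpace H]
    (e : HilbertBasis ℕ ℂ H) (ψ : ℕ → H) (hψ : Orthonormal ℂ ψ)
    (lam ρ : ℕ → ℝ) (hlam : Monotone lam) (hlam0 : ∀ j, 0 ≤ lam j)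
    (hρ : Antitone ρ) (hρ0 : ∀ j, 0 ≤ ρ j) :
    ∑' j, ENNReal.ofReal (lam j * ρ j)
      ≤ ∑' j, ENNReal.ofReal (ρ j)
          * ∑' k, ENNReal.ofReal (lam k) * (‖(inner ℂ (e k) (ψ j) : ℂ)‖₊ : ℝ≥0∞) ^ 2 :=
  stmt6_general e ψ hψ lam ρ hlam hρ hρ0
end

section
/- Let H be a positive self-adjoint operator with discrete spectrum {λ_j} (nondecreasing) satisfying Σ_j λ_j^{-γ/(1-γ)} < ∞ for some γ ∈ (0,1), and let β be convex with β(0)=0, β continuous on [0,N], and |β(x)| ≤ C x^γ for x ∈ [0, x̄]. Then for any density operator ρ with eigenvalues {ρ_j} (nonincreasing, ρ₀ ≤ N) and finite energy E = Σ_j λ_j ρ_j, one has Σ_j |β(ρ_j)| ≤ N_a · max_{[0,N]}|β| + C' E^γ, where N_a is the number of eigenvalues of ρ exceeding x̄ and C' depends only on C, γ and Σ_j λ_j^{-γ/(1-γ)}. -/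
/-!
Beyond the first `N_a` indices every `ρ_j` lies in `[0, x̄]`, where `|β(ρ_j)| ≤ C ρ_j^γ`. Writing
`ρ_j^γ = (λ_j ρ_j)^γ · λ_j^{-γ}` and applying Hölder's inequality with exponents `1/γ` and
`1/(1-γ)` bounds the tail `Σ ρ_j^γ` by `E^γ (Σ λ_j^{-γ/(1-γ)})^{1-γ}`. Each of the first `N_a`
terms is at most `max_{[0,N]} |β|`, which is finite because `β` is continuous on `[0,N]`.
-/

open Real

theorem summable_rpow_and_tsum_rpow_le_of_weighted {ι : Type*} {γ : ℝ} {l x : ι → ℝ}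
    (hγ0 : 0 < γ) (hγ1 : γ < 1) (hl : ∀ j, 0 < l j) (hx : ∀ j, 0 ≤ x j)
    (hlx : Summable fun j => l j * x j)
    (hl' : Summable fun j => l j ^ (-(γ / (1 - γ)))) :
    (Summable fun j => x j ^ γ) ∧
      ∑' j, x j ^ γ ≤ (∑' j, l j * x j) ^ γ * (∑' j, l j ^ (-(γ / (1 - γ)))) ^ (1 - γ) := by
  have hpq : (1 / γ).HolderConjugate (1 / (1 - γ)) := by
    rw [Real.holderConjugate_iff]
    exact ⟨by rwa [lt_div_iff₀ hγ0, one_mul], by rw [one_div, one_div, inv_inv, inv_inv]; ring⟩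
  have hlx0 : ∀ j, 0 ≤ l j * x j := fun j => mul_nonneg (hl j).le (hx j)
  have hf : ∀ j, ((l j * x j) ^ γ) ^ (1 / γ) = l j * x j := fun j => by
    rw [← rpow_mul (hlx0 j), mul_one_div_cancel hγ0.ne', rpow_one]
  have hg : ∀ j, (l j ^ (-γ)) ^ (1 / (1 - γ)) = l j ^ (-(γ / (1 - γ))) := fun j => by
    rw [← rpow_mul (hl j).le, neg_mul, mul_one_div]
  have hfg : ∀ j, (l j * x j) ^ γ * l j ^ (-γ) = x j ^ γ := fun j => by
    rw [mul_rpow (hl j).le (hx j), mul_right_comm, ← rpow_add (hl j), add_neg_cancel, rpow_zero,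
      one_mul]
  obtain ⟨hsum, hle⟩ := summable_and_inner_le_Lp_mul_Lq_tsum_of_nonneg hpq
    (fun j => rpow_nonneg (hlx0 j) γ) (fun j => rpow_nonneg (hl j).le (-γ))
    (by simpa only [hf] using hlx) (by simpa only [hg] using hl')
  simp only [hf, hg, hfg, one_div_one_div] at hsum hle
  exact ⟨hsum, hle⟩

theorem summable_rpow_nat_add_and_tsum_le_of_weighted {γ : ℝ} {l x : ℕ → ℝ} (n : ℕ)
    (hγ0 : 0 < γ) (hγ1 : γ < 1) (hl : ∀ j, 0 < l j) (hx : ∀ j, 0 ≤ x j)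
    (hlx : Summable fun j => l j * x j) (hl' : Summable fun j => l j ^ (-(γ / (1 - γ)))) :
    (Summable fun j => x (j + n) ^ γ) ∧
      ∑' j, x (j + n) ^ γ ≤ (∑' j, l j * x j) ^ γ * (∑' j, l j ^ (-(γ / (1 - γ)))) ^ (1 - γ) := by
  have hshift : Function.Injective (· + n) := add_left_injective n
  obtain ⟨hsum, hle⟩ := summable_rpow_and_tsum_rpow_le_of_weighted (l := fun j => l (j + n))
    (x := fun j => x (j + n)) hγ0 hγ1 (fun j => hl _) (fun j => hx _)
    ((summable_nat_add_iff n).2 hlx) ((summable_nat_add_iff n).2 hl')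
  have hlx0 : ∀ j, 0 ≤ l j * x j := fun j => mul_nonneg (hl j).le (hx j)
  have hl'0 : ∀ j, 0 ≤ l j ^ (-(γ / (1 - γ))) := fun j => rpow_nonneg (hl j).le _
  refine ⟨hsum, hle.trans (mul_le_mul ?_ ?_ (rpow_nonneg (tsum_nonneg fun _ => hl'0 _) _)
    (rpow_nonneg (tsum_nonneg fun _ => hlx0 _) _))⟩
  · exact rpow_le_rpow (tsum_nonneg fun _ => hlx0 _)
      (tsum_comp_le_tsum_of_inj hlx hlx0 hshift) hγ0.le
  · exact rpow_le_rpow (tsum_nonneg fun _ => hl'0 _)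
      (tsum_comp_le_tsum_of_inj hl' hl'0 hshift) (by linarith)

theorem abs_le_sSup_image_abs_Icc {β : ℝ → ℝ} {a b x : ℝ} (hcont : ContinuousOn β (Set.Icc a b))
    (hx : x ∈ Set.Icc a b) : |β x| ≤ sSup ((fun y => |β y|) '' Set.Icc a b) :=
  le_csSup (isCompact_Icc.image_of_continuousOn hcont.abs).bddAbove ⟨x, hx, rfl⟩

theorem stmt7_general (N xbar C γ : ℝ)
    (hγ : γ ∈ Set.Ioo (0:ℝ) 1) (hC : 0 < C)
    (β : ℝ → ℝ)
    (hcont : ContinuousOn β (Set.Icc 0 N))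
    (hβb : ∀ x ∈ Set.Icc 0 xbar, |β x| ≤ C * x ^ γ)
    (lam : ℕ → ℝ) (hlampos : ∀ j, 0 < lam j)
    (hlamsum : Summable fun j => lam j ^ (-(γ/(1-γ))))
    (ρ : ℕ → ℝ) (hρa : Antitone ρ) (hρ0 : ∀ j, 0 ≤ ρ j) (hρN : ρ 0 ≤ N)
    (hE : Summable fun j => lam j * ρ j)
    (Na : ℕ) (hNa : ∀ j, Na ≤ j → ρ j ≤ xbar) :
    ∑' j, |β (ρ j)| ≤ (Na : ℝ) * sSup ((fun x => |β x|) '' Set.Icc 0 N)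
      + C * (∑' j, lam j * ρ j) ^ γ * (∑' j, lam j ^ (-(γ/(1-γ)))) ^ (1-γ) := by
  obtain ⟨hholder_sum, hholder⟩ :=
    summable_rpow_nat_add_and_tsum_le_of_weighted Na hγ.1 hγ.2 hlampos hρ0 hE hlamsum
  have htail : ∀ j, |β (ρ (j + Na))| ≤ C * ρ (j + Na) ^ γ := fun j =>
    hβb _ ⟨hρ0 _, hNa _ (Nat.le_add_left _ _)⟩
  have htail_sum : Summable fun j => |β (ρ (j + Na))| :=
    .of_nonneg_of_le (fun _ => abs_nonneg _) htail (hholder_sum.mul_left C)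
  have hhead : ∑ j ∈ Finset.range Na, |β (ρ j)| ≤ Na * sSup ((fun x => |β x|) '' Set.Icc 0 N) := by
    simpa using (Finset.range Na).sum_le_card_nsmul _ _ fun j _ =>
      abs_le_sSup_image_abs_Icc hcont ⟨hρ0 j, (hρa j.zero_le).trans hρN⟩
  have hsum : Summable fun j => |β (ρ j)| := (summable_nat_add_iff Na).1 htail_sum
  rw [← hsum.sum_add_tsum_nat_add Na]
  refine add_le_add hhead ?_
  calc ∑' j, |β (ρ (j + Na))| ≤ ∑' j, C * ρ (j + Na) ^ γ :=
        htail_sum.tsum_le_tsum htail (hholder_sum.mul_left C)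
    _ = C * ∑' j, ρ (j + Na) ^ γ := tsum_mul_left
    _ ≤ _ := by rw [mul_assoc]; exact mul_le_mul_of_nonneg_left hholder hC.le

/-- Control of the entropy by the energy: if `|β(x)| ≤ C x^γ` near `0`,
`Σ_j λ_j^{-γ/(1-γ)} < ∞`, and `ρ_j` is nonincreasing with `ρ_j ≤ x̄` for `j ≥ N_a`, then
`Σ_j |β(ρ_j)| ≤ N_a · max_{[0,N]}|β| + C E^γ (Σ_j λ_j^{-γ/(1-γ)})^{1-γ}` where
`E = Σ_j λ_j ρ_j`, by Hölder's inequality. -/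
theorem stmt7 (N xbar C γ : ℝ) (hN : 0 < N) (hxbar : xbar ∈ Set.Ioo 0 N)
    (hγ : γ ∈ Set.Ioo (0:ℝ) 1) (hC : 0 < C)
    (β : ℝ → ℝ) (hconv : ConvexOn ℝ (Set.Icc 0 N) β) (hβ0 : β 0 = 0)
    (hcont : ContinuousOn β (Set.Icc 0 N))
    (hβb : ∀ x ∈ Set.Icc 0 xbar, |β x| ≤ C * x ^ γ)
    (lam : ℕ → ℝ) (hlam : Monotone lam) (hlampos : ∀ j, 0 < lam j)
    (hlamsum : Summable fun j => lam j ^ (-(γ/(1-γ))))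
    (ρ : ℕ → ℝ) (hρa : Antitone ρ) (hρ0 : ∀ j, 0 ≤ ρ j) (hρN : ρ 0 ≤ N)
    (hE : Summable fun j => lam j * ρ j)
    (Na : ℕ) (hNa : ∀ j, Na ≤ j → ρ j ≤ xbar) :
    ∑' j, |β (ρ j)| ≤ (Na : ℝ) * sSup ((fun x => |β x|) '' Set.Icc 0 N)
      + C * (∑' j, lam j * ρ j) ^ γ * (∑' j, lam j ^ (-(γ/(1-γ)))) ^ (1-γ) :=
  stmt7_general N xbar C γ hγ hC β hcont hβb lam hlampos hlamsum ρ hρa hρ0 hρN hE Na hNa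
end

section
/- Let {λ_j} be a nondecreasing sequence tending to +∞, T > 0, and ξ: (-β_+, -β_-) → (0, N̄) a strictly decreasing continuous bijection extended by ξ(-β_-)=0, satisfying |ξ(x)| ≤ C x^{-1/(1-γ)} for all large x, with Σ_j λ_j^{-γ/(1-γ)} < ∞ for some γ ∈ (d/(d+2), 1). Then for every μ with λ_0 + μ ≥ -Tβ_+, the operator ρ_{T,μ} = Σ_j ξ((λ_j+μ)/T) 1_{λ_j+μ ≤ -Tβ_-} |φ_j⟩⟨φ_j| satisfies Σ_j (1+λ_j) ξ((λ_j+μ)/T) 1_{λ_j+μ ≤ -Tβ_-} < ∞, i.e. ρ_{T,μ} is trace class with finite energy. -/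
/-- Finite mass and energy of the generalized Gibbs state candidate
`ρ_{T,μ} = Σ_j ξ((λ_j+μ)/T) 1_{λ_j+μ ≤ -Tβ_-} |φ_j⟩⟨φ_j|`: under the decay bound
`|ξ(x)| ≤ C x^{-1/(1-γ)}` for large `x` and the spectral summability
`Σ_j λ_j^{-γ/(1-γ)} < ∞`, for every `μ` with `λ₀ + μ ≥ -Tβ_+` the series
`Σ_j (1+λ_j) ξ((λ_j+μ)/T) 1_{λ_j+μ ≤ -Tβ_-}` converges, i.e. `ρ_{T,μ}` is trace class with
finite energy. -/
theorem stmt10 (Nbar T C γ μ : ℝ) (hT : 0 < T) (hγl : (0:ℝ) < γ) (hγu : γ < 1)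
    (hNbar : 0 < Nbar) (hC : 0 < C)
    (βm βp : EReal) (hβorder : βm < βp)
    (lam : ℕ → ℝ) (hlam : Monotone lam) (hlampos : ∀ j, 0 < lam j)
    (hlamtop : Filter.Tendsto lam Filter.atTop Filter.atTop)
    (hlamsum : Summable fun j => lam j ^ (-(γ/(1-γ))))
    (ξ : ℝ → ℝ) (hξ0 : ∀ x, 0 ≤ ξ x) (hξN : ∀ x, ξ x ≤ Nbar)
    (x₀ : ℝ) (hdecay : ∀ x : ℝ, x₀ ≤ x → |ξ x| ≤ C * x ^ (-(1/(1-γ))))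
    (hμ : -((T : EReal) * βp) ≤ ((lam 0 + μ : ℝ) : EReal)) :
    Summable fun j => if ((lam j + μ : ℝ) : EReal) ≤ -((T : EReal) * βm)
      then (1 + lam j) * ξ ((lam j + μ) / T) else 0 := by
  have h1γ : 0 < 1 - γ := by linarith
  set e : ℝ := -(1/(1-γ)) with he
  have hee : e ≤ 0 := by
    have : 0 < 1/(1-γ) := by positivity
    simp only [he]; linarith
  have hsum : (1:ℝ) + e = -(γ/(1-γ)) := by
    simp only [he]; field_simp; ring
  have hO : (fun j => if ((lam j + μ : ℝ) : EReal) ≤ -((T : EReal) * βm)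
      then (1 + lam j) * ξ ((lam j + μ) / T) else 0)
      =O[Filter.atTop] (fun j => lam j ^ (-(γ/(1-γ)))) := by
    rw [Asymptotics.isBigO_iff]
    refine ⟨2 * C * (2*T) ^ (-e), ?_⟩
    filter_upwards [hlamtop.eventually_ge_atTop (max 1 (max (2*|μ|) (T*x₀ - μ)))]
      with j hj
    have hl1 : 1 ≤ lam j := le_trans (le_max_left _ _) hj
    have hlμ : 2*|μ| ≤ lam j := le_trans (le_trans (le_max_left _ _) (le_max_right _ _)) hj
    have hlx : T*x₀ - μ ≤ lam j := le_trans (le_trans (le_max_right _ _) (le_max_right _ _)) hj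
    have habs := abs_le.mp (le_refl |μ|)
    have hhalf : lam j / 2 ≤ lam j + μ := by
      have := neg_abs_le μ; linarith
    have hpos : 0 < lam j + μ := by linarith
    have hx : x₀ ≤ (lam j + μ) / T := by
      rw [le_div_iff₀ hT]; linarith
    have hxpos : 0 < (lam j + μ) / T := div_pos hpos hT
    have hRHSnn : 0 ≤ 2 * C * (2*T) ^ (-e) * lam j ^ (-(γ/(1-γ))) := by positivity
    rw [Real.norm_eq_abs, Real.norm_eq_abs,
      abs_of_nonneg (Real.rpow_nonneg (hlampos j).le _)]
    split_ifs with h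
    · rw [abs_of_nonneg (mul_nonneg (by linarith [hlampos j]) (hξ0 _))]
      have hξb : ξ ((lam j + μ) / T) ≤ C * ((lam j + μ) / T) ^ e :=
        le_trans (le_abs_self _) (hdecay _ hx)
      have hstep1 : (1 + lam j) * ξ ((lam j + μ) / T)
          ≤ (2 * lam j) * (C * ((lam j + μ) / T) ^ e) := by
        apply mul_le_mul (by linarith) hξb (hξ0 _) (by linarith [hlampos j])
      have hdivle : lam j / (2*T) ≤ (lam j + μ) / T := by
        rw [div_le_div_iff₀ (by linarith) hT]
        nlinarith [hlampos j]
      have hstep2 : ((lam j + μ) / T) ^ e ≤ (lam j / (2*T)) ^ e :=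
        Real.rpow_le_rpow_of_nonpos (by positivity) hdivle hee
      have heq : (lam j / (2*T)) ^ e = lam j ^ e * ((2*T) ^ (-e)) := by
        rw [Real.div_rpow (hlampos j).le (by linarith : (0:ℝ) ≤ 2*T),
          Real.rpow_neg (by linarith : (0:ℝ) ≤ 2*T) e, div_eq_mul_inv]
      have hlamrw : lam j ^ (-(γ/(1-γ))) = lam j * lam j ^ e := by
        rw [← hsum, Real.rpow_add (hlampos j), Real.rpow_one]
      calc (1 + lam j) * ξ ((lam j + μ) / T)
          ≤ (2 * lam j) * (C * ((lam j + μ) / T) ^ e) := hstep1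
        _ ≤ (2 * lam j) * (C * (lam j / (2*T)) ^ e) := by
            apply mul_le_mul_of_nonneg_left (mul_le_mul_of_nonneg_left hstep2 hC.le)
            linarith [hlampos j]
        _ = 2 * C * (2*T) ^ (-e) * (lam j * lam j ^ e) := by rw [heq]; ring
        _ = 2 * C * (2*T) ^ (-e) * lam j ^ (-(γ/(1-γ))) := by rw [hlamrw]
    · simpa using hRHSnn
  exact summable_of_isBigO_nat hlamsum hO
end

section
/- Let E: (0,∞) → ℝ and S: (0,∞) → ℝ be functions such that E is continuous nondecreasing, S is continuous nonincreasing, and for all T₂, T₁ > 0: (E(T₂) + T₂ S(T₂)) - (E(T₁) + T₁ S(T₁)) = ∫_{T₁}^{T₂} S(τ) dτ. If E(T₁) = E(T₂) for some T₁ < T₂, then S(T₁) = S(T₂); and moreover for any T₁ < T₂ with E(T₂) > E(T₁), one has S(T₁) > S(T₂). -/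
/-- Thermodynamic relation between energy and entropy of generalized Gibbs states:
if `E` is continuous nondecreasing, `S` continuous nonincreasing and the free energy
`F(T) = E(T) + T·S(T)` satisfies `F(T₂) - F(T₁) = ∫_{T₁}^{T₂} S`, then equal energies force
equal entropies, and a strict increase of the energy forces a strict decrease of the entropy. -/
theorem stmt14 (E S : ℝ → ℝ)
    (hEc : ContinuousOn E (Set.Ioi 0)) (hEm : MonotoneOn E (Set.Ioi 0))
    (hSc : ContinuousOn S (Set.Ioi 0)) (hSa : AntitoneOn S (Set.Ioi 0))
    (hF : ∀ T₁ T₂ : ℝ, 0 < T₁ → 0 < T₂ →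
      (E T₂ + T₂ * S T₂) - (E T₁ + T₁ * S T₁) = ∫ τ in T₁..T₂, S τ) :
    ∀ T₁ T₂ : ℝ, 0 < T₁ → T₁ < T₂ →
      (E T₁ = E T₂ → S T₁ = S T₂) ∧ (E T₁ < E T₂ → S T₂ < S T₁) := by
  intro T₁ T₂ hT₁ h12
  have hT₂ : (0:ℝ) < T₂ := hT₁.trans h12
  have hsub : Set.uIcc T₁ T₂ ⊆ Set.Ioi 0 := by
    rw [Set.uIcc_of_le h12.le]
    intro x hx
    exact lt_of_lt_of_le hT₁ hx.1
  have hint : IntervalIntegrable S MeasureTheory.volume T₁ T₂ :=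
    (hSc.mono hsub).intervalIntegrable
  have hmem : ∀ x ∈ Set.Icc T₁ T₂, x ∈ Set.Ioi 0 := by
    intro x hx; exact lt_of_lt_of_le hT₁ hx.1
  have hub : (∫ τ in T₁..T₂, S τ) ≤ (T₂ - T₁) * S T₁ := by
    have h := intervalIntegral.integral_mono_on h12.le hint
      (intervalIntegrable_const (c := S T₁))
      (fun x hx => hSa (Set.mem_Ioi.2 hT₁) (hmem x hx) hx.1)
    simpa using h
  have hlb : (T₂ - T₁) * S T₂ ≤ ∫ τ in T₁..T₂, S τ := by
    have h := intervalIntegral.integral_mono_on h12.le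
      (intervalIntegrable_const (c := S T₂)) hint
      (fun x hx => hSa (hmem x hx) (Set.mem_Ioi.2 hT₂) hx.2)
    simpa using h
  have key := hF T₁ T₂ hT₁ hT₂
  constructor
  · intro hE
    have h1 : S T₂ ≤ S T₁ := hSa (Set.mem_Ioi.2 hT₁) (Set.mem_Ioi.2 hT₂) h12.le
    nlinarith
  · intro hE
    nlinarith
end

section
/- Let ξ: ℝ → [0, n̄] be nonnegative and nonincreasing, with ξ(t) → n̄ as t → -∞, and suppose ξ(M) > 0 for all finite M. If {λ_j} is a sequence tending to +∞ and μ_T is a family with μ_T/T nondecreasing in T such that Σ_j ξ(λ_j/T + μ_T/T) = n̄ for all T, then μ_T/T → +∞ as T → +∞. -/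
open Filter

/-- If `ξ` is nonnegative, nonincreasing, tends to `n̄` at `-∞`, and is strictly positive at
every finite argument, `λ_j → +∞`, `μ_T/T` is nondecreasing on `(0,∞)` and the mass constraint
`Σ_j ξ(λ_j/T + μ_T/T) = n̄` holds for every `T > 0`, then `μ_T/T → +∞` as `T → +∞`. -/
theorem stmt18 (nbar : ℝ) (hnbar : 0 < nbar) (ξ : ℝ → ℝ)
    (hξ0 : ∀ t, 0 ≤ ξ t) (hξb : ∀ t, ξ t ≤ nbar) (hanti : Antitone ξ)
    (hlim : Tendsto ξ atBot (nhds nbar))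
    (hpos : ∀ M : ℝ, 0 < ξ M)
    (lam : ℕ → ℝ) (hlam : Tendsto lam atTop atTop)
    (μ : ℝ → ℝ)
    (hmono : MonotoneOn (fun T => μ T / T) (Set.Ioi 0))
    (hsum : ∀ T, 0 < T → Summable (fun j => ξ (lam j / T + μ T / T)))
    (hZ : ∀ T, 0 < T → ∑' j, ξ (lam j / T + μ T / T) = nbar) :
    Tendsto (fun T => μ T / T) atTop atTop := by
  by_contra hcon
  rw [tendsto_atTop_atTop] at hcon
  push_neg at hcon
  obtain ⟨b, hb⟩ := hcon
  have hbd : ∀ T : ℝ, 0 < T → μ T / T < b := by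
    intro T hT
    obtain ⟨a, ha, hab⟩ := hb (max T 1)
    have ha1 : (1:ℝ) ≤ a := le_trans (le_max_right T 1) ha
    have haT : T ≤ a := le_trans (le_max_left T 1) ha
    have := hmono (Set.mem_Ioi.2 hT) (Set.mem_Ioi.2 (lt_of_lt_of_le one_pos ha1)) haT
    exact lt_of_le_of_lt this hab
  set c := ξ (1 + b) with hc
  have hcpos : 0 < c := hpos _
  obtain ⟨N, hN⟩ := exists_nat_gt (nbar / c)
  have hNc : nbar < N * c := (div_lt_iff₀ hcpos).mp hN
  set T := 1 + ∑ j ∈ Finset.range N, |lam j| with hTdef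
  have hsum0 : 0 ≤ ∑ j ∈ Finset.range N, |lam j| :=
    Finset.sum_nonneg fun j _ => abs_nonneg _
  have hTpos : 0 < T := by linarith
  have hbound : ∀ j ∈ Finset.range N, c ≤ ξ (lam j / T + μ T / T) := by
    intro j hj
    apply hanti
    have h2 : |lam j| ≤ ∑ i ∈ Finset.range N, |lam i| :=
      Finset.single_le_sum (fun i _ => abs_nonneg (lam i)) hj
    have h3 : lam j ≤ T := le_trans (le_abs_self _) (by linarith)
    have h1 : lam j / T ≤ 1 := (div_le_one hTpos).2 h3
    have h4 := le_of_lt (hbd T hTpos)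
    linarith
  have hle := Summable.sum_le_tsum (Finset.range N) (fun j _ => hξ0 _) (hsum T hTpos)
  have hge : (N : ℝ) * c ≤ ∑ j ∈ Finset.range N, ξ (lam j / T + μ T / T) := by
    calc (N:ℝ) * c = ∑ _j ∈ Finset.range N, c := by
          rw [Finset.sum_const, Finset.card_range, nsmul_eq_mul]
      _ ≤ _ := Finset.sum_le_sum hbound
  rw [hZ T hTpos] at hle
  linarith
end

section
/- Let H = -Δ + V on L²(ℝᵈ) with V(x) = 1 + |x|^θ, θ > 0, and let N(E) be the number of eigenvalues of H less than or equal to E. Given s > 0, define the Riesz mean R_s(E) = Tr(|E - H|₊^s) = Σ_j |E - λ_j|₊^s. Then R_s(E) = s ∫₀^∞ y^{s-1} N(E - y) dy for all E, and R_s(E) / (C_{s,d} E^{s+(1+2/θ)d/2} W_s(1)) → 1 as E → ∞, where C_{s,d} = Γ(s+1)/((4π)^{d/2}Γ(s+1+d/2)) and W_s(1) = ∫_{ℝᵈ}|1-|x|^θ|₊^{s+d/2} dx. -/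
/-!
Since the eigenvalues tend to infinity, only finitely many lie below `E`, and the layer-cake
identity is the sum over them of `(E - λ)₊^s = s ∫₀^∞ y^(s-1) 1[y ≤ E - λ] dy`.

For the asymptotics put `γ = (1 + 2/θ) d/2` and `c = (4π)^(-d/2) / Γ(1 + d/2)`. Substituting
`y = E t` gives `R_s(E) / E^(s+γ) = s ∫₀^∞ t^(s-1) N(E(1-t)) / E^γ dt`. By the Weyl law the
integrand tends to `c W_0(1) t^(s-1) (1-t)₊^γ`, and it is dominated by a multiple of
`t^(s-1) 1[t ≤ 2]` since `N(E(1-t)) ≤ N(E) = O(E^γ)`, so the limit is `s c W_0(1) B(s, γ+1)`.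
To identify this constant with `C_{s,d} W_s(1)`, integrate `y^(s-1) (1 - y - |x|^θ)₊^(d/2)` over
`y > 0` and `x ∈ ℝᵈ` in both orders, using the scaling
`∫ (b - |x|^θ)₊^q dx = b^(q + d/θ) ∫ (1 - |x|^θ)₊^q dx`.
-/

open MeasureTheory Real Filter Set Topology

section OneDimensional

variable {s : ℝ}

lemma integrableOn_Ioc_rpow_sub_one (hs : 0 < s) (b : ℝ) :
    IntegrableOn (fun y : ℝ => y ^ (s - 1)) (Ioc 0 b) := by
  rcases le_or_gt b 0 with hb | hb
  · simp [Ioc_eq_empty (not_lt.mpr hb)]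
  · exact (intervalIntegral.intervalIntegrable_rpow' (by linarith : (-1:ℝ) < s - 1)).1

lemma mul_integral_Ioc_rpow_sub_one (hs : 0 < s) (a : ℝ) :
    s * ∫ y in Ioc 0 a, y ^ (s - 1) = (max a 0) ^ s := by
  rcases le_or_gt a 0 with ha | ha
  · simp [Ioc_eq_empty (not_lt.mpr ha), max_eq_right ha, zero_rpow hs.ne']
  rw [← intervalIntegral.integral_of_le ha.le, integral_rpow (Or.inl (by linarith)),
    sub_add_cancel, zero_rpow hs.ne', sub_zero, max_eq_left ha.le, mul_div_cancel₀ _ hs.ne']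

lemma integral_rpow_mul_one_sub_rpow {u v : ℝ} (hu : 0 < u) (hv : 0 < v) :
    ∫ t in (0:ℝ)..1, t ^ (u - 1) * (1 - t) ^ (v - 1) = Gamma u * Gamma v / Gamma (u + v) := by
  have hbeta : Complex.betaIntegral u v
      = ((∫ t in (0:ℝ)..1, t ^ (u - 1) * (1 - t) ^ (v - 1) : ℝ) : ℂ) := by
    rw [Complex.betaIntegral, ← intervalIntegral.integral_ofReal]
    refine intervalIntegral.integral_congr fun t ht => ?_
    rw [uIcc_of_le zero_le_one] at ht
    simp only [Complex.ofReal_mul, Complex.ofReal_cpow ht.1,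
      Complex.ofReal_cpow (sub_nonneg.2 ht.2)]
    push_cast
    ring_nf
  have key := Complex.Gamma_mul_Gamma_eq_betaIntegral (s := u) (t := v)
    (by simpa using hu) (by simpa using hv)
  rw [hbeta, ← Complex.ofReal_add, Complex.Gamma_ofReal, Complex.Gamma_ofReal,
    Complex.Gamma_ofReal] at key
  rw [eq_div_iff (by positivity), mul_comm]
  exact_mod_cast key.symm

variable {q : ℝ}

lemma integrableOn_Ioi_rpow_mul_max_sub_rpow (hs : 0 < s) (hq : 0 < q) (a : ℝ) :
    IntegrableOn (fun y => y ^ (s - 1) * (max (a - y) 0) ^ q) (Ioi 0) := by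
  have hIoc : IntegrableOn (fun y => y ^ (s - 1) * (max (a - y) 0) ^ q) (Ioc 0 a) := by
    refine (integrableOn_Ioc_rpow_sub_one hs a).mul_bdd (c := (max a 0) ^ q)
      (by fun_prop : Measurable fun y : ℝ => (max (a - y) 0) ^ q).aestronglyMeasurable
      ((ae_restrict_iff' measurableSet_Ioc).2 (.of_forall fun y hy => ?_))
    rw [norm_of_nonneg (by positivity)]
    exact rpow_le_rpow (le_max_right _ _) (max_le_max (by linarith [hy.1]) le_rfl) hq.le
  refine hIoc.of_forall_sdiff_eq_zero measurableSet_Ioi fun y hy => ?_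
  have hya : a < y := not_le.1 fun h => hy.2 ⟨hy.1, h⟩
  rw [max_eq_right (by linarith), zero_rpow hq.ne', mul_zero]

lemma integral_Ioi_rpow_mul_max_one_sub_rpow (hs : 0 < s) (hq : 0 < q) :
    ∫ y in Ioi 0, y ^ (s - 1) * (max (1 - y) 0) ^ q
      = Gamma s * Gamma (q + 1) / Gamma (s + q + 1) := by
  rw [setIntegral_eq_of_subset_of_forall_sdiff_eq_zero measurableSet_Ioi Ioc_subset_Ioi_self
      fun y hy => ?_]
  · rw [setIntegral_congr_fun measurableSet_Ioc
        fun y hy => by rw [max_eq_left (sub_nonneg.2 hy.2)],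
      ← intervalIntegral.integral_of_le zero_le_one, add_assoc,
      ← integral_rpow_mul_one_sub_rpow hs (by linarith), add_sub_cancel_right]
  · have hy1 : 1 < y := not_le.1 fun h => hy.2 ⟨hy.1, h⟩
    rw [max_eq_right (by linarith), zero_rpow hq.ne', mul_zero]

lemma integral_Ioi_rpow_mul_max_sub_rpow (hs : 0 < s) (hq : 0 < q) (a : ℝ) :
    ∫ y in Ioi 0, y ^ (s - 1) * (max (a - y) 0) ^ q
      = Gamma s * Gamma (q + 1) / Gamma (s + q + 1) * (max a 0) ^ (s + q) := by
  rcases le_or_gt a 0 with ha | ha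
  · rw [setIntegral_congr_fun measurableSet_Ioi fun y (hy : 0 < y) => by
        rw [max_eq_right (by linarith), zero_rpow hq.ne', mul_zero]]
    simp [max_eq_right ha, zero_rpow (by linarith : s + q ≠ 0)]
  have hscale : ∀ t ∈ Ioi (0:ℝ), (a * t) ^ (s - 1) * (max (a - a * t) 0) ^ q
      = a ^ (s - 1 + q) * (t ^ (s - 1) * (max (1 - t) 0) ^ q) := fun t ht => by
    have hmax : max (a * (1 - t)) 0 = a * max (1 - t) 0 := by
      rw [mul_max_of_nonneg _ _ ha.le, mul_zero]
    rw [← mul_one_sub, hmax, mul_rpow ha.le (le_of_lt ht),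
      mul_rpow ha.le (le_max_right _ _), rpow_add ha]
    ring
  have hsubst := integral_comp_mul_left_Ioi' (fun y => y ^ (s - 1) * (max (a - y) 0) ^ q) 0 ha
  rw [mul_zero] at hsubst
  rw [← hsubst, setIntegral_congr_fun measurableSet_Ioi hscale,
    integral_const_mul, integral_Ioi_rpow_mul_max_one_sub_rpow hs hq, max_eq_left ha.le,
    smul_eq_mul]
  have hpow : a ^ (s + q) = a * a ^ (s - 1 + q) := by
    rw [show s + q = 1 + (s - 1 + q) by ring, rpow_add ha, rpow_one]
  rw [hpow]
  ring

end OneDimensional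

section LayerCake

variable {ι : Type*} {lam : ι → ℝ}

lemma finite_setOf_le_of_tendsto_cofinite (h : Tendsto lam cofinite atTop) (E : ℝ) :
    {j | lam j ≤ E}.Finite := by
  simpa using h.eventually (eventually_gt_atTop E)

lemma monotone_tsum_indicator_le (h : Tendsto lam cofinite atTop) :
    Monotone fun E => ∑' j, {j | lam j ≤ E}.indicator (fun _ => (1:ℝ)) j := by
  have hsum (E : ℝ) : Summable fun j => {j | lam j ≤ E}.indicator (fun _ => (1:ℝ)) j :=
    summable_of_hasFiniteSupport ((finite_setOf_le_of_tendsto_cofinite h E).subset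
      (support_indicator_subset))
  intro a b hab
  exact (hsum a).tsum_le_tsum (fun j => indicator_le_indicator_of_subset
    (fun j (hj : lam j ≤ a) => hj.trans hab) (fun _ => zero_le_one) j) (hsum b)

lemma tsum_indicator_le_eq_zero_of_lt {c t : ℝ} (hc : ∀ j, c ≤ lam j) (ht : t < c) :
    ∑' j, {j | lam j ≤ t}.indicator (fun _ => (1:ℝ)) j = 0 := by
  refine (tsum_congr fun j => indicator_of_notMem ?_ _).trans tsum_zero
  exact fun (hj : lam j ≤ t) => (hc j).not_gt (hj.trans_lt ht)

theorem tsum_max_sub_rpow_eq_integral (h : Tendsto lam cofinite atTop) {s : ℝ} (hs : 0 < s)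
    (E : ℝ) :
    ∑' j, (max (E - lam j) 0) ^ s
      = s * ∫ y in Ioi 0,
          y ^ (s - 1) * ∑' j, {j | lam j ≤ E - y}.indicator (fun _ => (1:ℝ)) j := by
  classical
  set F := (finite_setOf_le_of_tendsto_cofinite h E).toFinset
  have hF : ∀ j ∉ F, E < lam j := by simp [F]
  have hcount : ∀ y ∈ Ioi (0:ℝ),
      y ^ (s - 1) * ∑' j, {j | lam j ≤ E - y}.indicator (fun _ => (1:ℝ)) j
        = ∑ j ∈ F, (Ioc 0 (E - lam j)).indicator (fun y => y ^ (s - 1)) y := by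
    intro y (hy : 0 < y)
    rw [tsum_eq_sum (s := F) fun j hj => indicator_of_notMem (show j ∉ {j | lam j ≤ E - y}
      from fun (hj' : lam j ≤ E - y) => by linarith [hF j hj]) _, Finset.mul_sum]
    refine Finset.sum_congr rfl fun j _ => ?_
    by_cases hj : lam j ≤ E - y
    · rw [indicator_of_mem (show j ∈ {j | lam j ≤ E - y} from hj),
        indicator_of_mem (show y ∈ Ioc 0 (E - lam j) from ⟨hy, by linarith⟩), mul_one]
    · rw [indicator_of_notMem (show j ∉ {j | lam j ≤ E - y} from hj),
        indicator_of_notMem fun hy' => hj (by linarith [hy'.2]), mul_zero]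
  have hint (a : ℝ) : Integrable ((Ioc 0 a).indicator fun y : ℝ => y ^ (s - 1))
      (volume.restrict (Ioi 0)) :=
    ((integrableOn_Ioc_rpow_sub_one hs a).integrable_indicator measurableSet_Ioc).integrableOn
  rw [setIntegral_congr_fun measurableSet_Ioi hcount, integral_finsetSum _ fun j _ => hint _,
    Finset.mul_sum, tsum_eq_sum (s := F) fun j hj => by
      rw [max_eq_right (by linarith [hF j hj]), zero_rpow hs.ne']]
  refine Finset.sum_congr rfl fun j _ => ?_
  rw [setIntegral_indicator measurableSet_Ioc, inter_eq_right.2 Ioc_subset_Ioi_self,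
    mul_integral_Ioc_rpow_sub_one hs]

end LayerCake

section Abelian

variable {N : ℝ → ℝ} {c s γ A : ℝ}

lemma integral_rpow_mul_comp_sub_div_rpow {E : ℝ} (hE : 0 < E) :
    (∫ y in Ioi 0, y ^ (s - 1) * N (E - y)) / E ^ (s + γ)
      = ∫ t in Ioi 0, t ^ (s - 1) * N (E * (1 - t)) / E ^ γ := by
  have hsubst := integral_comp_mul_left_Ioi' (fun y => y ^ (s - 1) * N (E - y)) 0 hE
  rw [mul_zero] at hsubst
  have hscale : ∀ t ∈ Ioi (0:ℝ), (E * t) ^ (s - 1) * N (E - E * t)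
      = E ^ (s - 1) * (t ^ (s - 1) * N (E * (1 - t))) := fun t ht => by
    rw [mul_rpow hE.le (le_of_lt ht), mul_one_sub]
    ring
  rw [← hsubst, setIntegral_congr_fun measurableSet_Ioi hscale, integral_const_mul, smul_eq_mul,
    ← mul_assoc, rpow_sub_one hE.ne', mul_div_cancel₀ _ hE.ne', rpow_add hE,
    mul_div_mul_left _ _ (rpow_pos_of_pos hE s).ne', integral_div]

lemma tendsto_comp_mul_one_sub_div_rpow (hc : ∀ t < c, N t = 0) (hγ : 0 < γ)
    (hN : Tendsto (fun t => N t / t ^ γ) atTop (𝓝 A)) {t : ℝ} (ht : t ≠ 1) :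
    Tendsto (fun E => N (E * (1 - t)) / E ^ γ) atTop (𝓝 (A * (max (1 - t) 0) ^ γ)) := by
  rcases lt_or_gt_of_ne ht with ht1 | ht1
  · have hscale : Tendsto (fun E => E * (1 - t)) atTop atTop :=
      tendsto_id.atTop_mul_const (by linarith)
    rw [max_eq_left (by linarith)]
    refine ((hN.comp hscale).mul_const ((1 - t) ^ γ)).congr' ?_
    filter_upwards [eventually_gt_atTop 0] with E hE
    rw [Function.comp_apply, mul_rpow hE.le (by linarith)]
    field_simp
  · have hscale : Tendsto (fun E => E * (1 - t)) atTop atBot :=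
      tendsto_id.atTop_mul_const_of_neg (by linarith)
    rw [max_eq_right (by linarith), zero_rpow hγ.ne', mul_zero]
    refine tendsto_const_nhds.congr' ?_
    filter_upwards [hscale.eventually (eventually_lt_atBot c)] with E hE
    rw [hc _ hE, zero_div]

theorem tendsto_integral_rpow_mul_comp_sub_div_rpow (hmono : Monotone N) (hc : ∀ t < c, N t = 0)
    (hγ : 0 < γ) (hN : Tendsto (fun t => N t / t ^ γ) atTop (𝓝 A)) (hs : 0 < s) :
    Tendsto (fun E => (∫ y in Ioi 0, y ^ (s - 1) * N (E - y)) / E ^ (s + γ)) atTop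
      (𝓝 (Gamma s * Gamma (γ + 1) / Gamma (s + γ + 1) * A)) := by
  have hnonneg (t : ℝ) : 0 ≤ N t := by
    rw [← hc (min t (c - 1)) (by linarith [min_le_right t (c - 1)])]
    exact hmono (min_le_left _ _)
  have hlimit : ∫ t in Ioi 0, t ^ (s - 1) * (A * (max (1 - t) 0) ^ γ)
      = Gamma s * Gamma (γ + 1) / Gamma (s + γ + 1) * A := by
    simp_rw [mul_left_comm _ A]
    rw [integral_const_mul, integral_Ioi_rpow_mul_max_one_sub_rpow hs hγ, mul_comm]
  rw [← hlimit]
  refine Tendsto.congr' ((eventually_gt_atTop 0).mono fun E hE =>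
    (integral_rpow_mul_comp_sub_div_rpow hE).symm) ?_
  refine tendsto_integral_filter_of_dominated_convergence
    ((Ioc 0 2).indicator fun t => (A + 1) * t ^ (s - 1)) ?_ ?_ ?_ ?_
  · have := hmono.measurable
    exact .of_forall fun E => by fun_prop
  · filter_upwards [hN.eventually (gt_mem_nhds (lt_add_one A)), eventually_ge_atTop 1,
      eventually_ge_atTop (-c)] with E hNE hE1 hEc
    rw [ae_restrict_iff' measurableSet_Ioi]
    refine .of_forall fun t (ht : 0 < t) => ?_
    have hE : 0 < E := by linarith
    rw [norm_of_nonneg (by have := hnonneg (E * (1 - t)); positivity)]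
    by_cases ht2 : t ≤ 2
    · rw [indicator_of_mem (show t ∈ Ioc 0 2 from ⟨ht, ht2⟩), mul_div_assoc, mul_comm (A + 1)]
      gcongr
      calc N (E * (1 - t)) / E ^ γ ≤ N E / E ^ γ := by
            gcongr; exact hmono (by nlinarith)
        _ ≤ A + 1 := hNE.le
    · rw [hc _ (by nlinarith), mul_zero, zero_div]
      have hA : 0 ≤ A + 1 := le_trans (by have := hnonneg E; positivity) hNE.le
      exact indicator_nonneg (fun t ht => by have := ht.1; positivity) t
  · exact (IntegrableOn.integrable_indicator ((integrableOn_Ioc_rpow_sub_one hs 2).const_mul _)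
      measurableSet_Ioc).integrableOn
  · filter_upwards [ae_restrict_of_ae ((countable_singleton (1:ℝ)).ae_notMem volume)] with t ht
    simp_rw [mul_div_assoc]
    exact (tendsto_comp_mul_one_sub_div_rpow hc hγ hN ht).const_mul _

end Abelian

section PhaseSpaceIntegrals

variable {V : Type*} [NormedAddCommGroup V] [NormedSpace ℝ V] [FiniteDimensional ℝ V]
  [MeasurableSpace V] [BorelSpace V] (μ : Measure V) [μ.IsAddHaarMeasure] {θ q : ℝ}

lemma integrable_max_sub_norm_rpow_rpow (hθ : 0 < θ) (hq : 0 < q) (b : ℝ) :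
    Integrable (fun x : V => (max (b - ‖x‖ ^ θ) 0) ^ q) μ := by
  refine Continuous.integrable_of_hasCompactSupport ?_ ?_
  · exact ((continuous_const.sub (continuous_norm.rpow_const fun _ => Or.inr hθ.le)).max
      continuous_const).rpow_const fun _ => Or.inr hq.le
  refine HasCompactSupport.intro (isCompact_closedBall 0 ((max b 0) ^ θ⁻¹)) fun x hx => ?_
  rw [Metric.mem_closedBall, dist_zero_right, not_le] at hx
  have hbx : max b 0 < ‖x‖ ^ θ := by
    simpa [rpow_inv_rpow (le_max_right b 0) hθ.ne'] using
      rpow_lt_rpow (by positivity) hx hθ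
  rw [max_eq_right (by linarith [le_max_left b 0]), zero_rpow hq.ne']

lemma integral_max_one_sub_norm_rpow_rpow_pos (hθ : 0 < θ) (hq : 0 < q) :
    0 < ∫ x, (max (1 - ‖x‖ ^ θ) 0) ^ q ∂μ := by
  rw [integral_pos_iff_support_of_nonneg (fun x => by positivity)
    (integrable_max_sub_norm_rpow_rpow μ hθ hq 1)]
  refine (Metric.measure_ball_pos μ 0 one_pos).trans_le (measure_mono fun x hx => ?_)
  rw [Metric.mem_ball, dist_zero_right] at hx
  have : ‖x‖ ^ θ < 1 := rpow_lt_one (norm_nonneg x) hx hθ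
  exact (rpow_pos_of_pos (lt_max_of_lt_left (by linarith)) q).ne'

lemma integral_max_sub_norm_rpow_rpow (hθ : 0 < θ) (hq : 0 < q) (b : ℝ) :
    ∫ x, (max (b - ‖x‖ ^ θ) 0) ^ q ∂μ
      = (max b 0) ^ (q + Module.finrank ℝ V / θ) * ∫ x, (max (1 - ‖x‖ ^ θ) 0) ^ q ∂μ := by
  rcases le_or_gt b 0 with hb | hb
  · have hzero (x : V) : (max (b - ‖x‖ ^ θ) 0) ^ q = 0 := by
      rw [max_eq_right (by linarith [rpow_nonneg (norm_nonneg x) θ]), zero_rpow hq.ne']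
    simp only [hzero, integral_zero, max_eq_right hb]
    rw [zero_rpow (by positivity), zero_mul]
  set r : ℝ := b ^ θ⁻¹
  have hr : 0 < r := rpow_pos_of_pos hb _
  have hscale (x : V) : (max (b - ‖r • x‖ ^ θ) 0) ^ q = b ^ q * (max (1 - ‖x‖ ^ θ) 0) ^ q := by
    have hmax : max (b * (1 - ‖x‖ ^ θ)) 0 = b * max (1 - ‖x‖ ^ θ) 0 := by
      rw [mul_max_of_nonneg _ _ hb.le, mul_zero]
    rw [norm_smul, norm_of_nonneg hr.le, mul_rpow hr.le (norm_nonneg x),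
      rpow_inv_rpow hb.le hθ.ne', ← mul_one_sub, hmax, mul_rpow hb.le (le_max_right _ _)]
  have hsubst := Measure.integral_comp_smul_of_nonneg μ
    (fun x : V => (max (b - ‖x‖ ^ θ) 0) ^ q) r (hR := hr.le)
  simp only [hscale, integral_const_mul, smul_eq_mul] at hsubst
  have hrn : r ^ Module.finrank ℝ V = b ^ (Module.finrank ℝ V / θ : ℝ) := by
    rw [← rpow_natCast, ← rpow_mul hb.le, inv_mul_eq_div]
  rw [max_eq_left hb.le, rpow_add hb, ← hrn, mul_assoc, mul_left_comm, hsubst,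
    mul_inv_cancel_left₀ (pow_ne_zero _ hr.ne')]

theorem Gamma_mul_Gamma_div_mul_integral_max_one_sub_norm_rpow_rpow (hθ : 0 < θ) {p s : ℝ}
    (hp : 0 < p) (hs : 0 < s) :
    Gamma s * Gamma (p + 1) / Gamma (s + p + 1) * ∫ x, (max (1 - ‖x‖ ^ θ) 0) ^ (s + p) ∂μ
      = Gamma s * Gamma (p + Module.finrank ℝ V / θ + 1)
          / Gamma (s + (p + Module.finrank ℝ V / θ) + 1) * ∫ x, (max (1 - ‖x‖ ^ θ) 0) ^ p ∂μ := by
  set n : ℝ := (Module.finrank ℝ V : ℝ)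
  set f : ℝ → V → ℝ := fun y x => y ^ (s - 1) * (max (1 - ‖x‖ ^ θ - y) 0) ^ p
  have hslice (y : ℝ) : ∫ x, f y x ∂μ
      = y ^ (s - 1) * (max (1 - y) 0) ^ (p + n / θ) * ∫ x, (max (1 - ‖x‖ ^ θ) 0) ^ p ∂μ := by
    simp only [f, sub_right_comm (1:ℝ) _ y]
    rw [integral_const_mul, integral_max_sub_norm_rpow_rpow μ hθ hp, mul_assoc]
  have hint : Integrable (Function.uncurry f) ((volume.restrict (Ioi 0)).prod μ) := by
    rw [integrable_prod_iff (by fun_prop : Measurable (Function.uncurry f)).aestronglyMeasurable]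
    refine ⟨.of_forall fun y => ?_, ?_⟩
    · simpa only [f, Function.uncurry_apply_pair, sub_right_comm (1:ℝ) _ y] using
        (integrable_max_sub_norm_rpow_rpow μ hθ hp (1 - y)).const_mul (y ^ (s - 1))
    refine ((integrableOn_Ioi_rpow_mul_max_sub_rpow hs (q := p + n / θ) (by positivity) 1).mul_const
      (∫ x, (max (1 - ‖x‖ ^ θ) 0) ^ p ∂μ)).congr ?_
    filter_upwards [ae_restrict_mem measurableSet_Ioi] with y (hy : 0 < y)
    rw [← hslice]
    exact integral_congr_ae (.of_forall fun x => (norm_of_nonneg (by positivity)).symm)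
  calc _ = ∫ x, (∫ y in Ioi 0, f y x) ∂μ := by
        simp only [f, integral_Ioi_rpow_mul_max_sub_rpow hs hp, integral_const_mul]
    _ = ∫ y in Ioi 0, ∫ x, f y x ∂μ := (integral_integral_swap hint).symm
    _ = _ := by
        simp only [hslice, integral_mul_const, integral_Ioi_rpow_mul_max_sub_rpow hs
          (q := p + n / θ) (by positivity), max_eq_left zero_le_one, one_rpow]
        ring

end PhaseSpaceIntegrals

lemma tendsto_rpow_sub_div_rpow (a γ : ℝ) :
    Tendsto (fun t : ℝ => (t - a) ^ γ / t ^ γ) atTop (𝓝 1) := by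
  have h : Tendsto (fun t : ℝ => 1 - a * t⁻¹) atTop (𝓝 1) := by
    simpa using (tendsto_inv_atTop_zero.const_mul a).const_sub 1
  refine (one_rpow γ ▸ h.rpow_const (Or.inl one_ne_zero)).congr' ?_
  filter_upwards [eventually_gt_atTop (max a 0)] with t ht
  have ht0 : 0 < t := (le_max_right a 0).trans_lt ht
  rw [← div_rpow (by linarith [le_max_left a 0]) ht0.le, sub_div, div_self ht0.ne', div_eq_mul_inv]

lemma tendsto_div_rpow_of_tendsto_div_sub_rpow {f : ℝ → ℝ} {a γ w A : ℝ} (hw : w ≠ 0)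
    (h : Tendsto (fun t => f t / ((t - a) ^ γ * w)) atTop (𝓝 A)) :
    Tendsto (fun t => f t / t ^ γ) atTop (𝓝 (A * w)) := by
  have hprod := (h.mul (tendsto_rpow_sub_div_rpow a γ)).mul_const w
  rw [mul_one] at hprod
  refine hprod.congr' ?_
  filter_upwards [eventually_gt_atTop a] with t ht
  have : (t - a) ^ γ ≠ 0 := (rpow_pos_of_pos (by linarith) γ).ne'
  field_simp

theorem stmt19_general (d : ℕ) (hd : 0 < d) (θ s : ℝ) (hθ : 0 < θ) (hs : 0 < s)
    (lam : ℕ → ℝ) (hlamtop : Tendsto lam atTop atTop)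
    (N : ℝ → ℝ)
    (hN : ∀ E, N E = ∑' j, Set.indicator {j : ℕ | lam j ≤ E} (fun _ => (1:ℝ)) j)
    (R : ℝ → ℝ) (hR : ∀ E, R E = ∑' j, (max (E - lam j) 0) ^ s)
    (W : ℝ → ℝ)
    (hW : ∀ t : ℝ, W t = ∫ x : EuclideanSpace ℝ (Fin d), (max (1 - ‖x‖ ^ θ) 0) ^ (t + (d:ℝ)/2))
    (hWeyl : Tendsto (fun E => N E / ((E - 1) ^ ((1 + 2/θ) * ((d:ℝ)/2)) * W 0)) atTop
      (nhds (1 / ((4 * π) ^ ((d:ℝ)/2) * Gamma (1 + (d:ℝ)/2))))) :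
    (∀ E : ℝ, R E = s * ∫ y in Set.Ioi (0:ℝ), y ^ (s - 1) * N (E - y)) ∧
    Tendsto (fun E => R E / (Gamma (s+1) / ((4*π) ^ ((d:ℝ)/2) * Gamma (s+1+(d:ℝ)/2))
        * E ^ (s + (1 + 2/θ) * ((d:ℝ)/2)) * W s)) atTop (nhds 1) := by
  have hcofinite : Tendsto lam cofinite atTop := Nat.cofinite_eq_atTop ▸ hlamtop
  have hN' : N = fun E => ∑' j, {j | lam j ≤ E}.indicator (fun _ => (1:ℝ)) j := funext hN
  have hlayer (E : ℝ) : R E = s * ∫ y in Ioi 0, y ^ (s - 1) * N (E - y) := by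
    rw [hR, hN', tsum_max_sub_rpow_eq_integral hcofinite hs]
  refine ⟨hlayer, ?_⟩
  set γ := (1 + 2 / θ) * ((d:ℝ) / 2)
  set c₀ := 1 / ((4 * π) ^ ((d:ℝ) / 2) * Gamma (1 + (d:ℝ) / 2))
  set C := Gamma (s + 1) / ((4 * π) ^ ((d:ℝ) / 2) * Gamma (s + 1 + (d:ℝ) / 2))
  have hγ : γ = d / 2 + Module.finrank ℝ (EuclideanSpace ℝ (Fin d)) / θ := by
    rw [finrank_euclideanSpace_fin]
    simp only [γ]
    field_simp
  have hW0 : W 0 = ∫ x : EuclideanSpace ℝ (Fin d), (max (1 - ‖x‖ ^ θ) 0) ^ ((d:ℝ) / 2) := by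
    rw [hW, zero_add]
  have hW0pos : 0 < W 0 := hW0 ▸ integral_max_one_sub_norm_rpow_rpow_pos _ hθ (by positivity)
  have hWspos : 0 < W s := hW s ▸ integral_max_one_sub_norm_rpow_rpow_pos _ hθ (by positivity)
  obtain ⟨c, hc⟩ := bddBelow_range_of_tendsto_atTop_atTop hlamtop
  have hN0 (t : ℝ) (ht : t < c) : N t = 0 := by
    rw [hN, tsum_indicator_le_eq_zero_of_lt (fun j => hc (mem_range_self j)) ht]
  have hNγ := tendsto_div_rpow_of_tendsto_div_sub_rpow hW0pos.ne' hWeyl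
  have hconst : s * (Gamma s * Gamma (γ + 1) / Gamma (s + γ + 1) * (c₀ * W 0)) = C * W s := by
    have hid := Gamma_mul_Gamma_div_mul_integral_max_one_sub_norm_rpow_rpow
      (volume : Measure (EuclideanSpace ℝ (Fin d))) hθ (p := d / 2) (by positivity) hs
    rw [← hγ, ← hW s, ← hW0] at hid
    rw [mul_left_comm _ c₀, mul_comm c₀, ← hid]
    simp only [C, c₀]
    rw [Gamma_add_one hs.ne', add_comm 1 ((d:ℝ) / 2),
      show s + 1 + (d:ℝ) / 2 = s + d / 2 + 1 by ring]
    field_simp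
  have hlim := (tendsto_integral_rpow_mul_comp_sub_div_rpow (hN' ▸ monotone_tsum_indicator_le
    hcofinite) hN0 (by positivity) hNγ hs).const_mul s
  rw [hconst] at hlim
  refine (div_self (mul_pos (show 0 < C by positivity) hWspos).ne' ▸ hlim.div_const (C * W s)).congr fun E => ?_
  rw [hlayer]
  ring

/-- Riesz means of `H = -Δ + V`, `V(x) = 1 + |x|^θ`: the layer-cake identity
`R_s(E) = Tr(|E-H|₊^s) = s ∫₀^∞ y^{s-1} N(E-y) dy` holds, and, assuming the Weyl asymptotics
`N(E)/((E-1)^{(1+2/θ)d/2} W_0(1)) → (4π)^{-d/2}/Γ(1+d/2)` for the eigenvalue counting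
function as input, one gets `R_s(E)/(C_{s,d} E^{s+(1+2/θ)d/2} W_s(1)) → 1` as `E → ∞`,
with `C_{s,d} = Γ(s+1)/((4π)^{d/2}Γ(s+1+d/2))` and `W_s(1) = ∫ |1-|x|^θ|₊^{s+d/2} dx`. -/
theorem stmt19 (d : ℕ) (hd : 0 < d) (θ s : ℝ) (hθ : 0 < θ) (hs : 0 < s)
    (lam : ℕ → ℝ) (hlam : Monotone lam) (hlam1 : ∀ j, 1 ≤ lam j)
    (hlamtop : Tendsto lam atTop atTop)
    (N : ℝ → ℝ)
    (hN : ∀ E, N E = ∑' j, Set.indicator {j : ℕ | lam j ≤ E} (fun _ => (1:ℝ)) j)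
    (R : ℝ → ℝ) (hR : ∀ E, R E = ∑' j, (max (E - lam j) 0) ^ s)
    (W : ℝ → ℝ)
    (hW : ∀ t : ℝ, W t = ∫ x : EuclideanSpace ℝ (Fin d), (max (1 - ‖x‖ ^ θ) 0) ^ (t + (d:ℝ)/2))
    (hWeyl : Tendsto (fun E => N E / ((E - 1) ^ ((1 + 2/θ) * ((d:ℝ)/2)) * W 0)) atTop
      (nhds (1 / ((4 * π) ^ ((d:ℝ)/2) * Gamma (1 + (d:ℝ)/2))))) :
    (∀ E : ℝ, R E = s * ∫ y in Set.Ioi (0:ℝ), y ^ (s - 1) * N (E - y)) ∧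
    Tendsto (fun E => R E / (Gamma (s+1) / ((4*π) ^ ((d:ℝ)/2) * Gamma (s+1+(d:ℝ)/2))
        * E ^ (s + (1 + 2/θ) * ((d:ℝ)/2)) * W s)) atTop (nhds 1) :=
  stmt19_general d hd θ s hθ hs lam hlamtop N hN R hR W hW hWeyl
end
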